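/- arXiv:2011.02153 — 10 statements merged into one kernel-verified Lean document; each statement's English description precedes it below -/
import Mathlib

section
/- For any domain G ⊊ ℝⁿ and any points x, y, z ∈ G, the point pair function satisfies p_G(x,y) ≤ √2·(p_G(x,z) + p_G(z,y)); i.e., p_G is a quasi-metric with constant at most √2. -/
open Metric Set

variable {E : Type*} [NormedAddCommGroup E] [NormedSpace ℝ E]

/-- Distance to the boundary of `G`. -/
noncomputable def dG (G : Set E) (x : E) : ℝ := Metric.infDist x (frontier G)

/-- The point pair function `p_G`. -/
noncomputable def pG (G : Set E) (x y : E) : ℝ :=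
  dist x y / Real.sqrt (dist x y ^ 2 + 4 * dG G x * dG G y)

/-- The triangular ratio metric `s_G`. -/
noncomputable def sG (G : Set E) (x y : E) : ℝ :=
  dist x y / ⨅ z : frontier G, (dist x (z : E) + dist (z : E) y)

/-- The `j*_G` metric. -/
noncomputable def jG (G : Set E) (x y : E) : ℝ :=
  dist x y / (dist x y + 2 * min (dG G x) (dG G y))

/-- The set `X̃` of points `x̃` with `|x−x̃| = 2 d_G(x)` whose midpoint with `x` lies on `∂G`. -/
def Xt (G : Set E) (x : E) : Set E :=
  {x' | dist x x' = 2 * dG G x ∧ (2⁻¹ : ℝ) • (x + x') ∈ frontier G}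

/-- The quasi-metric `w_G` defined for convex domains. -/
noncomputable def wG (G : Set E) (x y : E) : ℝ :=
  dist x y / min (Metric.infDist x (Xt G y)) (Metric.infDist y (Xt G x))

/-! `p_G` is squeezed between `j*_G` and `√2 j*_G`, and `j*_G` satisfies the triangle inequality
because `d_G` is nonnegative and 1-Lipschitz: if `d_G(x) ≤ d_G(y)`, then `d_G(z) ≤ d_G(x) + |x - z|`,
and the triangle inequality reduces to one for the ratios `t / (t + s)`, which increase in `t` and
decrease in `s`. -/

section RatioInequalities

variable {b c s s' t t' : ℝ}

lemma div_add_le_div_add_of_le (hs : 0 ≤ s) (ht : 0 ≤ t) (htt' : t ≤ t') :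
    t / (t + s) ≤ t' / (t' + s) := by
  rcases ht.eq_or_lt with rfl | ht
  · simp only [zero_div]
    positivity
  rw [div_le_div_iff₀ (by linarith) (by linarith)]
  nlinarith

lemma div_add_le_div_add_of_le_right (ht : 0 ≤ t) (hs' : 0 ≤ s') (hss' : s' ≤ s) :
    t / (t + s) ≤ t / (t + s') := by
  rcases ht.eq_or_lt with rfl | ht
  · simp
  exact div_le_div_of_nonneg_left ht.le (by linarith) (by linarith)

lemma add_div_add_le_div_add_add_div_add (hb : 0 ≤ b) (hc : 0 ≤ c) (hs : 0 ≤ s) :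
    (b + c) / (b + c + s) ≤ b / (b + s) + c / (c + (s + 2 * b)) := by
  rcases (add_nonneg hb hs).eq_or_lt with hbs | hbs
  · obtain ⟨rfl, rfl⟩ : b = 0 ∧ s = 0 := ⟨by linarith, by linarith⟩
    simp
  rw [div_add_div _ _ hbs.ne' (by linarith),
    div_le_div_iff₀ (by linarith) (mul_pos hbs (by linarith))]
  -- the difference of the two sides is `b * c * (b + c)`
  nlinarith [mul_nonneg (mul_nonneg hb hc) (add_nonneg hb hc)]

end RatioInequalities

section PointPair

variable {F : Type*} [NormedAddCommGroup F] (G : Set F) (x y z : F)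

lemma dG_nonneg : 0 ≤ dG G x := infDist_nonneg

lemma dG_le_dG_add_dist : dG G x ≤ dG G y + dist x y := infDist_le_infDist_add_dist

lemma jG_comm : jG G x y = jG G y x := by
  rw [jG, jG, dist_comm, min_comm]

lemma jG_triangle : jG G x y ≤ jG G x z + jG G z y := by
  wlog h : dG G x ≤ dG G y generalizing x y
  · rw [jG_comm, add_comm, jG_comm G x z, jG_comm G z y]
    exact this y x (le_of_not_ge h)
  have hzy : min (dG G z) (dG G y) ≤ dG G x + dist x z :=
    (min_le_left _ _).trans (by linarith [dG_le_dG_add_dist G z x, dist_comm x z])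
  have hdx := dG_nonneg G x
  have hdz := dG_nonneg G z
  rw [jG, jG, jG, min_eq_left h]
  calc dist x y / (dist x y + 2 * dG G x)
      ≤ (dist x z + dist z y) / (dist x z + dist z y + 2 * dG G x) :=
        div_add_le_div_add_of_le (by positivity) dist_nonneg (dist_triangle x z y)
    _ ≤ dist x z / (dist x z + 2 * dG G x)
          + dist z y / (dist z y + (2 * dG G x + 2 * dist x z)) :=
        add_div_add_le_div_add_add_div_add dist_nonneg dist_nonneg (by positivity)
    _ ≤ dist x z / (dist x z + 2 * min (dG G x) (dG G z))
          + dist z y / (dist z y + 2 * min (dG G z) (dG G y)) := by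
        refine add_le_add ?_ ?_
        · exact div_add_le_div_add_of_le_right dist_nonneg (by positivity)
            (by gcongr; exact min_le_left _ _)
        · have := le_min hdz (dG_nonneg G y)
          exact div_add_le_div_add_of_le_right dist_nonneg (by linarith) (by linarith)

lemma pG_le_sqrt_two_mul_jG : pG G x y ≤ √2 * jG G x y := by
  rw [pG, jG]
  set m := min (dG G x) (dG G y)
  rcases (dist_nonneg (x := x) (y := y)).eq_or_lt with hxy | hxy
  · simp [← hxy]
  have hm : 0 ≤ m := le_min (dG_nonneg G x) (dG_nonneg G y)
  have hm2 : m * m ≤ dG G x * dG G y :=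
    mul_le_mul (min_le_left _ _) (min_le_right _ _) hm (dG_nonneg G x)
  have hden : dist x y + 2 * m ≤ √2 * √(dist x y ^ 2 + 4 * dG G x * dG G y) := by
    rw [← Real.sqrt_mul zero_le_two]
    exact Real.le_sqrt_of_sq_le (by nlinarith [sq_nonneg (dist x y - 2 * m)])
  calc dist x y / √(dist x y ^ 2 + 4 * dG G x * dG G y)
      = √2 * (dist x y / (√2 * √(dist x y ^ 2 + 4 * dG G x * dG G y))) := by
        field_simp
    _ ≤ √2 * (dist x y / (dist x y + 2 * m)) := by gcongr

lemma jG_le_pG : jG G x y ≤ pG G x y := by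
  rw [pG, jG]
  rcases (dist_nonneg (x := x) (y := y)).eq_or_lt with hxy | hxy
  · simp [← hxy]
  set m := min (dG G x) (dG G y) with hm_def
  have hprod : dG G x * dG G y ≤ m * (m + dist x y) := by
    have := dG_le_dG_add_dist G x y
    have := dG_le_dG_add_dist G y x
    rcases le_total (dG G x) (dG G y) with h | h
    · rw [hm_def, min_eq_left h]
      nlinarith [dG_nonneg G x, dist_comm x y]
    · rw [hm_def, min_eq_right h]
      nlinarith [dG_nonneg G y, dist_comm x y]
  have hm : 0 ≤ m := le_min (dG_nonneg G x) (dG_nonneg G y)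
  have hprod_nonneg := mul_nonneg (dG_nonneg G x) (dG_nonneg G y)
  refine div_le_div_of_nonneg_left dist_nonneg (Real.sqrt_pos.2 (by nlinarith)) ?_
  exact Real.sqrt_le_iff.2 ⟨by positivity, by nlinarith⟩

end PointPair

theorem pG_quasi_sqrt_two_general (n : ℕ) (G : Set (EuclideanSpace ℝ (Fin n)))
    (x y z : EuclideanSpace ℝ (Fin n)) :
    pG G x y ≤ Real.sqrt 2 * (pG G x z + pG G z y) :=
  calc pG G x y ≤ √2 * jG G x y := pG_le_sqrt_two_mul_jG G x y
    _ ≤ √2 * (jG G x z + jG G z y) := by gcongr; exact jG_triangle G x y z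
    _ ≤ √2 * (pG G x z + pG G z y) := by gcongr <;> exact jG_le_pG G _ _

/-- For any domain `G ⊊ ℝⁿ` and points `x, y, z ∈ G`, the point pair function
satisfies `p_G(x,y) ≤ √2 (p_G(x,z) + p_G(z,y))`. -/
theorem pG_quasi_sqrt_two (n : ℕ) (G : Set (EuclideanSpace ℝ (Fin n)))
    (hGopen : IsOpen G) (hGconn : IsConnected G) (hGne : G ≠ Set.univ)
    (x y z : EuclideanSpace ℝ (Fin n)) (hx : x ∈ G) (hy : y ∈ G) (hz : z ∈ G) :
    pG G x y ≤ Real.sqrt 2 * (pG G x z + pG G z y) :=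
  pG_quasi_sqrt_two_general n G x y z
end

section
/- In the planar sector S_{π/2} = {x ∈ ℂ : 0 < arg x < π/2}, the points x = e^{πi/5}, y = e^{3πi/10}, z = (x+y)/2 violate the triangle inequality for the point pair function: p(x,y) > p(x,z) + p(z,y). Hence p_{S_{π/2}} is not a metric. -/
open Metric Set

variable {E : Type*} [NormedAddCommGroup E] [NormedSpace ℝ E]

/-- The open planar sector of angle `θ`. -/
def Sector (θ : ℝ) : Set ℂ :=
  {z | ∃ r : ℝ, 0 < r ∧ ∃ φ : ℝ, 0 < φ ∧ φ < θ ∧ z = (r : ℂ) * Complex.exp (φ * Complex.I)}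

/-!
In the quadrant `S_{π/2}` the boundary distance is `d(w) = min (Re w) (Im w)`. With
`a = sin (π/5) < c = cos (π/5)`, the points `x = c + a i` and `y = a + c i` are mirror images
in the diagonal, so `d(x) = d(y) = a`, while their midpoint `z` lies on the diagonal with
`d(z) = (a + c)/2`. Writing `D = |x - y|`, one gets `p(x,z) + p(z,y) = D / √(D²/4 + 4 a d(z))`,
which exceeds `p(x,y) = D / √(D² + 4a²)` as soon as `3D² + 16a² < 16 a d(z)`, i.e.
`14a² + 6c² < 20ac`; this holds because `c = (1 + √5)/4`.
-/

open Complex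

lemma sector_pi_div_two_eq : Sector (Real.pi / 2) = Ioi 0 ×ℂ Ioi 0 := by
  ext w
  simp only [Sector, mem_ofPred_eq, mem_reProdIm, mem_Ioi]
  constructor
  · rintro ⟨r, hr, φ, hφ0, hφ, rfl⟩
    have hcos : 0 < Real.cos φ := Real.cos_pos_of_mem_Ioo ⟨by linarith [Real.pi_pos], hφ⟩
    have hsin : 0 < Real.sin φ := Real.sin_pos_of_pos_of_lt_pi hφ0 (by linarith)
    simp only [re_ofReal_mul, im_ofReal_mul, exp_ofReal_mul_I_re, exp_ofReal_mul_I_im]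
    exact ⟨mul_pos hr hcos, mul_pos hr hsin⟩
  · rintro ⟨hre, him⟩
    have hw : w ≠ 0 := fun h => by simp [h] at hre
    have harg : 0 < w.arg := (arg_nonneg_iff.2 him.le).lt_of_ne fun h =>
      him.ne' (arg_eq_zero_iff.1 h.symm).2
    exact ⟨‖w‖, norm_pos_iff.2 hw, w.arg, harg,
      (le_abs_self _).trans_lt (abs_arg_lt_pi_div_two_iff.2 (Or.inl hre)),
      (norm_mul_exp_arg_mul_I w).symm⟩

lemma dG_quadrant {w : ℂ} (hre : 0 < w.re) (him : 0 < w.im) :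
    dG (Ioi 0 ×ℂ Ioi 0) w = min w.re w.im := by
  have hfr : frontier (Ioi (0 : ℝ) ×ℂ Ioi 0) = Ici 0 ×ℂ {0} ∪ {0} ×ℂ Ici 0 := by
    simp only [frontier_reProdIm, closure_Ioi, frontier_Ioi]
  have hre_mem : (w.re : ℂ) ∈ frontier (Ioi (0 : ℝ) ×ℂ Ioi 0) := by
    simp [hfr, mem_reProdIm, hre.le]
  have him_mem : (w.im * I : ℂ) ∈ frontier (Ioi (0 : ℝ) ×ℂ Ioi 0) := by
    simp [hfr, mem_reProdIm, him.le]
  refine le_antisymm (le_min ?_ ?_) ((le_infDist ⟨_, hre_mem⟩).2 ?_)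
  · calc dG _ w ≤ dist w (w.im * I) := infDist_le_dist_of_mem him_mem
      _ = w.re := by simp [dist_of_im_eq, hre.le]
  · calc dG _ w ≤ dist w w.re := infDist_le_dist_of_mem hre_mem
      _ = w.im := by simp [dist_of_re_eq, him.le]
  · intro v hv
    rw [hfr] at hv
    rcases hv with ⟨-, hv⟩ | ⟨hv, -⟩
    · calc min w.re w.im ≤ |(w - v).im| := by simp_all [abs_of_pos him]
        _ ≤ dist w v := Complex.dist_eq w v ▸ abs_im_le_norm _
    · calc min w.re w.im ≤ |(w - v).re| := by simp_all [abs_of_pos hre]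
        _ ≤ dist w v := Complex.dist_eq w v ▸ abs_re_le_norm _

lemma pG_add_pG_midpoint_lt {G : Set E} {x y : E} (hxy : x ≠ y) (hd : dG G x = dG G y)
    (h : 3 * dist x y ^ 2 + 16 * dG G x ^ 2 < 16 * dG G x * dG G (midpoint ℝ x y)) :
    pG G x (midpoint ℝ x y) + pG G (midpoint ℝ x y) y < pG G x y := by
  have hD : 0 < dist x y := dist_pos.2 hxy
  have hxm : dist x (midpoint ℝ x y) = dist x y / 2 := by
    rw [dist_left_midpoint, Real.norm_two, inv_mul_eq_div]
  have hmy : dist (midpoint ℝ x y) y = dist x y / 2 := by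
    rw [dist_midpoint_right, Real.norm_two, inv_mul_eq_div]
  have hsum : pG G x (midpoint ℝ x y) + pG G (midpoint ℝ x y) y
      = dist x y / √((dist x y / 2) ^ 2 + 4 * dG G x * dG G (midpoint ℝ x y)) := by
    rw [pG, pG, hxm, hmy, ← hd, mul_right_comm 4 (dG G _), ← add_div, add_halves]
  have hpos : 0 < dist x y ^ 2 + 4 * dG G x * dG G x := by nlinarith [sq_nonneg (dG G x)]
  rw [hsum, pG, ← hd]
  exact div_lt_div_of_pos_left hD (Real.sqrt_pos.2 hpos) (Real.sqrt_lt_sqrt hpos.le (by linarith))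

lemma pG_quadrant_midpoint_lt {a c : ℝ} (ha : 0 < a) (hac : a < c)
    (h : 14 * a ^ 2 + 6 * c ^ 2 < 20 * a * c) :
    pG (Ioi 0 ×ℂ Ioi 0) ⟨c, a⟩ (midpoint ℝ ⟨c, a⟩ ⟨a, c⟩)
        + pG (Ioi 0 ×ℂ Ioi 0) (midpoint ℝ ⟨c, a⟩ ⟨a, c⟩) ⟨a, c⟩
      < pG (Ioi 0 ×ℂ Ioi 0) ⟨c, a⟩ ⟨a, c⟩ := by
  have hmid : midpoint ℝ (⟨c, a⟩ : ℂ) ⟨a, c⟩ = ⟨(c + a) / 2, (c + a) / 2⟩ := by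
    apply Complex.ext <;> simp [midpoint_eq_smul_add] <;> ring
  have hdx : dG (Ioi 0 ×ℂ Ioi 0) ⟨c, a⟩ = a := by
    rw [dG_quadrant (ha.trans hac) ha, min_eq_right hac.le]
  have hdy : dG (Ioi 0 ×ℂ Ioi 0) ⟨a, c⟩ = a := by
    rw [dG_quadrant ha (ha.trans hac), min_eq_left hac.le]
  have hdm : dG (Ioi 0 ×ℂ Ioi 0) (midpoint ℝ ⟨c, a⟩ ⟨a, c⟩) = (c + a) / 2 := by
    have hb : 0 < (c + a) / 2 := by linarith
    rw [hmid, dG_quadrant hb hb, min_self]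
  have hdist : dist (⟨c, a⟩ : ℂ) ⟨a, c⟩ ^ 2 = 2 * (c - a) ^ 2 := by
    rw [Complex.dist_eq, Complex.sq_norm, normSq_apply]
    simp only [sub_re, sub_im]
    ring
  refine pG_add_pG_midpoint_lt (fun he => hac.ne (congrArg re he).symm) (hdx.trans hdy.symm) ?_
  rw [hdx, hdm, hdist]
  linarith

lemma sin_pi_div_five_pos : 0 < Real.sin (Real.pi / 5) :=
  Real.sin_pos_of_pos_of_lt_pi (by positivity) (by linarith [Real.pi_pos])

lemma sin_cos_pi_div_five_quadratic_lt :
    14 * Real.sin (Real.pi / 5) ^ 2 + 6 * Real.cos (Real.pi / 5) ^ 2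
      < 20 * Real.sin (Real.pi / 5) * Real.cos (Real.pi / 5) := by
  have hsin := sin_pi_div_five_pos
  have h5 : √5 ^ 2 = 5 := Real.sq_sqrt (by norm_num)
  have h5_gt : 2 < √5 := by nlinarith [Real.sqrt_nonneg 5]
  have hsq : Real.sin (Real.pi / 5) ^ 2 = (5 - √5) / 8 := by
    rw [Real.sin_sq, Real.cos_pi_div_five]; linear_combination (-1 / 16 : ℝ) * h5
  have hlhs : 14 * Real.sin (Real.pi / 5) ^ 2 + 6 * Real.cos (Real.pi / 5) ^ 2 = 11 - √5 := by
    rw [hsq, Real.cos_pi_div_five]; linear_combination (3 / 8 : ℝ) * h5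
  have hrhs : 20 * Real.sin (Real.pi / 5) * Real.cos (Real.pi / 5)
      = 5 * Real.sin (Real.pi / 5) * (1 + √5) := by
    rw [Real.cos_pi_div_five]; ring
  rw [hlhs, hrhs]
  refine lt_of_pow_lt_pow_left₀ 2 (by positivity) ?_
  calc (11 - √5) ^ 2 = 126 - 22 * √5 := by linear_combination h5
    _ < 25 * (10 + 2 * √5) / 4 := by linarith
    _ = (5 * Real.sin (Real.pi / 5) * (1 + √5)) ^ 2 := by
      rw [mul_pow, mul_pow, hsq]; linear_combination (25 / 8 : ℝ) * (√5 - 3) * h5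

lemma sin_pi_div_five_lt_cos : Real.sin (Real.pi / 5) < Real.cos (Real.pi / 5) := by
  rw [← Real.cos_pi_div_two_sub]
  exact Real.cos_lt_cos_of_nonneg_of_le_pi (by positivity) (by linarith [Real.pi_pos])
    (by linarith [Real.pi_pos])

lemma exp_ofReal_mul_I_eq_mk (φ : ℝ) : exp (φ * I) = ⟨Real.cos φ, Real.sin φ⟩ :=
  Complex.ext (exp_ofReal_mul_I_re φ) (exp_ofReal_mul_I_im φ)

/-- In the sector `S_{π/2}`, the points `x = e^{πi/5}`, `y = e^{3πi/10}`, `z = (x+y)/2`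
violate the triangle inequality for the point pair function. -/
theorem pG_sector_not_metric
    (x y z : ℂ)
    (hx : x = Complex.exp ((Real.pi / 5 : ℝ) * Complex.I))
    (hy : y = Complex.exp ((3 * Real.pi / 10 : ℝ) * Complex.I))
    (hz : z = (x + y) / 2) :
    pG (Sector (Real.pi / 2)) x z + pG (Sector (Real.pi / 2)) z y
      < pG (Sector (Real.pi / 2)) x y := by
  obtain rfl : z = midpoint ℝ x y := by
    rw [hz, midpoint_eq_smul_add]
    simp only [invOf_eq_inv, real_smul, ofReal_inv, ofReal_ofNat]
    ring
  obtain rfl : x = ⟨Real.cos (Real.pi / 5), Real.sin (Real.pi / 5)⟩ := by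
    rw [hx, exp_ofReal_mul_I_eq_mk]
  obtain rfl : y = ⟨Real.sin (Real.pi / 5), Real.cos (Real.pi / 5)⟩ := by
    rw [hy, exp_ofReal_mul_I_eq_mk, show 3 * Real.pi / 10 = Real.pi / 2 - Real.pi / 5 by ring,
      Real.cos_pi_div_two_sub, Real.sin_pi_div_two_sub]
  rw [sector_pi_div_two_eq]
  exact pG_quadrant_midpoint_lt sin_pi_div_five_pos sin_pi_div_five_lt_cos
    sin_cos_pi_div_five_quadratic_lt
end

section
/- In an open planar sector S_θ = {x ∈ ℂ : 0 < arg x < θ} with π ≤ θ < 2π, the point pair function p_{S_θ} satisfies the triangle inequality, and hence is a metric. -/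
/-!
For `θ ≥ π` the complement of `S_θ` is a closed convex cone, and the argument works for any
open `G` with nonempty convex complement in a real Hilbert space. Fix `z ∈ G`, let `p` be its
projection onto `Gᶜ` (so `|z - p| = d(z)`) and let `z* = 2p - z`. As `Gᶜ` lies in the half-space
`⟪· - p, z - p⟫ ≤ 0`, every `w` satisfies `⟪w - p, z - p⟫ ≤ d(w) d(z)`, that is
`|w - z*|² ≤ |w - z|² + 4 d(w) d(z)`. Ptolemy's inequality for `x, z, y, z*` then gives
`2 |x - y| d(z) ≤ |x - z| √(|z - y|² + 4 d(z) d(y)) + |z - y| √(|x - z|² + 4 d(x) d(z))`,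
from which the triangle inequality for `p_G` follows by an elementary computation.
-/

open Metric Set

variable {E : Type*} [NormedAddCommGroup E] [NormedSpace ℝ E]

open scoped RealInnerProductSpace

lemma div_sqrt_sq_add_le_div_sqrt_sq_add {c c' k : ℝ} (hc : 0 ≤ c) (hcc' : c ≤ c')
    (hk : 0 < k) :
    c / √(c ^ 2 + k) ≤ c' / √(c' ^ 2 + k) := by
  rw [div_le_div_iff₀ (by positivity) (by positivity)]
  refine le_of_pow_le_pow_left₀ two_ne_zero (mul_nonneg (hc.trans hcc') (Real.sqrt_nonneg _)) ?_
  rw [mul_pow, mul_pow, Real.sq_sqrt (by positivity), Real.sq_sqrt (by positivity)]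
  nlinarith [mul_le_mul hcc' hcc' hc (hc.trans hcc')]

lemma div_sqrt_le_add_div_sqrt {a b c u v w : ℝ} (ha : 0 ≤ a) (hb : 0 ≤ b) (hc : 0 ≤ c)
    (hu : 0 < u) (hv : 0 < v) (hw : 0 < w)
    (h : 2 * c * w ≤ a * √(b ^ 2 + 4 * w * v) + b * √(a ^ 2 + 4 * u * w)) :
    c / √(c ^ 2 + 4 * u * v) ≤ a / √(a ^ 2 + 4 * u * w) + b / √(b ^ 2 + 4 * w * v) := by
  set A := √(a ^ 2 + 4 * u * w)
  set B := √(b ^ 2 + 4 * w * v)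
  have hA : 0 < A := Real.sqrt_pos.2 (by positivity)
  have hB : 0 < B := Real.sqrt_pos.2 (by positivity)
  have hA2 : A ^ 2 = a ^ 2 + 4 * u * w := Real.sq_sqrt (by positivity)
  have hB2 : B ^ 2 = b ^ 2 + 4 * w * v := Real.sq_sqrt (by positivity)
  set c' := (a * B + b * A) / (2 * w) with hc'
  -- `c'` is the largest `c` allowed by `h`, and at `c'` the square root is explicit because
  -- `(A * B + a * b) ^ 2 - (a * B + b * A) ^ 2 = (A ^ 2 - a ^ 2) * (B ^ 2 - b ^ 2)`.
  have hden : √(c' ^ 2 + 4 * u * v) = (A * B + a * b) / (2 * w) := by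
    rw [show c' ^ 2 + 4 * u * v = ((A * B + a * b) / (2 * w)) ^ 2 by
      rw [hc']
      field_simp
      linear_combination (b ^ 2 - B ^ 2) * hA2 - 4 * u * w * hB2]
    exact Real.sqrt_sq (by positivity)
  calc c / √(c ^ 2 + 4 * u * v) ≤ c' / √(c' ^ 2 + 4 * u * v) :=
        div_sqrt_sq_add_le_div_sqrt_sq_add hc (by rw [le_div_iff₀ (by positivity)]; linarith)
          (by positivity)
    _ = (a * B + b * A) / (A * B + a * b) := by
        rw [hden, hc']
        field_simp
    _ ≤ (a * B + b * A) / (A * B) :=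
        div_le_div_of_nonneg_left (by positivity) (by positivity) (by nlinarith)
    _ = a / A + b / B := by
        field_simp

section ConvexComplement

variable {F : Type*} [NormedAddCommGroup F] [InnerProductSpace ℝ F] {G : Set F}

lemma dist_pointReflection_sq (w p z : F) :
    dist w (Equiv.pointReflection p z) ^ 2 = dist w z ^ 2 + 4 * ⟪w - p, z - p⟫ := by
  rw [Equiv.pointReflection_apply, vsub_eq_sub, vadd_eq_add, dist_eq_norm, dist_eq_norm,
    show w - (p - z + p) = (w - p) + (z - p) by abel, show w - z = (w - p) - (z - p) by abel,
    norm_add_sq_real (w - p), norm_sub_sq_real (w - p)]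
  ring

lemma inner_le_dG_mul_dist {p z : F} (hp : p ∈ frontier G)
    (hsupp : ∀ q ∈ frontier G, ⟪z - p, q - p⟫ ≤ 0) (w : F) :
    ⟪w - p, z - p⟫ ≤ dG G w * dist z p := by
  obtain rfl | hzp := eq_or_ne z p
  · simp
  replace hzp := dist_pos.2 hzp
  rw [← div_le_iff₀ hzp, dG, le_infDist ⟨p, hp⟩]
  intro q hq
  rw [div_le_iff₀ hzp, dist_eq_norm, dist_eq_norm,
    show w - p = (w - q) + (q - p) by abel, inner_add_left]
  linarith [real_inner_le_norm (w - q) (z - p), real_inner_comm (z - p) (q - p), hsupp q hq]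

variable [CompleteSpace F]

lemma exists_mem_frontier_dist_eq_dG (hG : IsOpen G) (hK : Convex ℝ Gᶜ) (hne : Gᶜ.Nonempty)
    {z : F} (hz : z ∈ G) :
    ∃ p ∈ frontier G, dist z p = dG G z ∧ ∀ q ∈ Gᶜ, ⟪z - p, q - p⟫ ≤ 0 := by
  obtain ⟨p, hpK, hp⟩ :=
    exists_norm_eq_iInf_of_complete_convex hne hG.isClosed_compl.isComplete hK z
  have hzp : dist z p = infDist z Gᶜ := by
    rw [dist_eq_norm, hp, infDist_eq_iInf]
    simp only [dist_eq_norm]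
  have hpF : p ∈ frontier G := by
    refine ⟨closedBall_infDist_compl_subset_closure hz ?_, fun h => hpK (interior_subset h)⟩
    rw [mem_closedBall, dist_comm, hzp]
  refine ⟨p, hpF, le_antisymm ?_ (infDist_le_dist_of_mem hpF),
    (norm_eq_iInf_iff_real_inner_le_zero hK hpK).1 hp⟩
  rw [hzp]
  exact infDist_le_infDist_of_subset (disjoint_frontier_iff_isOpen.2 hG).subset_compl_right
    ⟨p, hpF⟩

lemma dG_pos (hG : IsOpen G) (hK : Convex ℝ Gᶜ) (hne : Gᶜ.Nonempty) {z : F} (hz : z ∈ G) :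
    0 < dG G z := by
  obtain ⟨p, hpF, hzp, -⟩ := exists_mem_frontier_dist_eq_dG hG hK hne hz
  rw [← hzp, dist_pos]
  rintro rfl
  exact (disjoint_frontier_iff_isOpen.2 hG).subset_compl_right hpF hz

theorem pG_le_pG_add_pG (hG : IsOpen G) (hK : Convex ℝ Gᶜ) (hne : Gᶜ.Nonempty) {x y z : F}
    (hx : x ∈ G) (hy : y ∈ G) (hz : z ∈ G) : pG G x y ≤ pG G x z + pG G z y := by
  obtain ⟨p, hpF, hzp, hsupp⟩ := exists_mem_frontier_dist_eq_dG hG hK hne hz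
  have hFG : frontier G ⊆ Gᶜ := (disjoint_frontier_iff_isOpen.2 hG).subset_compl_right
  set z' := Equiv.pointReflection p z
  have hzz' : dist z z' = 2 * dG G z := by
    rw [dist_comm, dist_pointReflection_right ℝ, Real.norm_two, dist_comm, hzp]
  have hz' (w : F) : dist w z' ≤ √(dist w z ^ 2 + 4 * dG G w * dG G z) := by
    refine Real.le_sqrt_of_sq_le ?_
    have := inner_le_dG_mul_dist hpF (fun q hq => hsupp q (hFG hq)) w
    rw [hzp] at this
    rw [dist_pointReflection_sq]
    linarith
  refine div_sqrt_le_add_div_sqrt dist_nonneg dist_nonneg dist_nonneg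
    (dG_pos hG hK hne hx) (dG_pos hG hK hne hy) (dG_pos hG hK hne hz) ?_
  calc 2 * dist x y * dG G z = dist x y * dist z z' := by rw [hzz']; ring
    _ ≤ dist x z * dist y z' + dist z y * dist x z' :=
        EuclideanGeometry.mul_dist_le_mul_dist_add_mul_dist x z y z'
    _ ≤ dist x z * √(dist z y ^ 2 + 4 * dG G z * dG G y)
          + dist z y * √(dist x z ^ 2 + 4 * dG G x * dG G z) := by
        gcongr
        · rw [dist_comm z y, mul_right_comm 4]
          exact hz' y
        · exact hz' x

end ConvexComplement

section Sector

open Complex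
open scoped Real

variable {θ : ℝ}

lemma mem_sector_iff (hθ₁ : π ≤ θ) (hθ₂ : θ < 2 * π) {z : ℂ} :
    z ∈ Sector θ ↔ 0 < z.im ∨ z.im * Real.cos θ < z.re * Real.sin θ := by
  constructor
  · rintro ⟨r, hr, φ, hφ0, hφθ, rfl⟩
    simp only [re_ofReal_mul, im_ofReal_mul, exp_ofReal_mul_I_re, exp_ofReal_mul_I_im]
    rcases lt_or_ge φ π with hφπ | hφπ
    · exact Or.inl (mul_pos hr (Real.sin_pos_of_pos_of_lt_pi hφ0 hφπ))
    · have h := Real.sin_neg_of_neg_of_neg_pi_lt (x := φ - θ) (by linarith) (by linarith)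
      rw [Real.sin_sub] at h
      exact Or.inr (by nlinarith)
  · rintro (h | h)
    · have hz : z ≠ 0 := by
        rintro rfl
        simp at h
      refine ⟨‖z‖, norm_pos_iff.2 hz, arg z, ?_, ?_, (norm_mul_exp_arg_mul_I z).symm⟩
      · exact (arg_nonneg_iff.2 h.le).lt_of_ne fun h0 => h.ne' (arg_eq_zero_iff.1 h0.symm).2
      · exact (arg_lt_pi_iff.2 (Or.inr h.ne')).trans_le hθ₁
    · set u := z * exp (↑(-θ) * I)
      have hu : u.im < 0 := by
        simp only [u, mul_im, exp_ofReal_mul_I_re, exp_ofReal_mul_I_im, Real.cos_neg,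
          Real.sin_neg]
        linarith
      have hu0 : u ≠ 0 := by
        rintro h0
        simp [h0] at hu
      refine ⟨‖u‖, norm_pos_iff.2 hu0, arg u + θ, by linarith [neg_pi_lt_arg u],
        by linarith [arg_neg_iff.2 hu], ?_⟩
      rw [ofReal_add, add_mul, exp_add, ← mul_assoc, norm_mul_exp_arg_mul_I, mul_assoc,
        ← exp_add]
      push_cast
      simp

lemma compl_sector (hθ₁ : π ≤ θ) (hθ₂ : θ < 2 * π) :
    (Sector θ)ᶜ =
      {z : ℂ | z.im ≤ 0} ∩ {z | z.re * Real.sin θ ≤ z.im * Real.cos θ} := by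
  ext z
  simp [mem_sector_iff hθ₁ hθ₂]

lemma isOpen_sector (hθ₁ : π ≤ θ) (hθ₂ : θ < 2 * π) : IsOpen (Sector θ) := by
  rw [← isClosed_compl_iff, compl_sector hθ₁ hθ₂]
  exact (isClosed_le continuous_im continuous_const).inter
    (isClosed_le (by fun_prop) (by fun_prop))

lemma convex_compl_sector (hθ₁ : π ≤ θ) (hθ₂ : θ < 2 * π) :
    Convex ℝ (Sector θ)ᶜ := by
  rw [compl_sector hθ₁ hθ₂]
  rintro a ⟨ha₁, ha₂⟩ b ⟨hb₁, hb₂⟩ s t hs ht -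
  simp only [mem_inter_iff, mem_ofPred_eq, add_re, add_im, smul_re, smul_im,
    smul_eq_mul] at *
  constructor <;> nlinarith [mul_le_mul_of_nonneg_left ha₂ hs, mul_le_mul_of_nonneg_left hb₂ ht]

end Sector

/-- In an open sector `S_θ` with `π ≤ θ < 2π`, the point pair function satisfies the
triangle inequality (and hence is a metric). -/
theorem pG_sector_metric (θ : ℝ) (hθ₁ : Real.pi ≤ θ) (hθ₂ : θ < 2 * Real.pi)
    (x y z : ℂ) (hx : x ∈ Sector θ) (hy : y ∈ Sector θ) (hz : z ∈ Sector θ) :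
    pG (Sector θ) x y ≤ pG (Sector θ) x z + pG (Sector θ) z y :=
  pG_le_pG_add_pG (isOpen_sector hθ₁ hθ₂) (convex_compl_sector hθ₁ hθ₂)
    ⟨0, by simp [compl_sector hθ₁ hθ₂]⟩ hx hy hz
end

section
/- For every angle 0 < θ < 2π, the point pair function on the sector S_θ is invariant under the Möbius transformation f(x) = x/|x|²: for all x, y ∈ S_θ, p_{S_θ}(f(x), f(y)) = p_{S_θ}(x,y). -/
open Metric Set

variable {E : Type*} [NormedAddCommGroup E] [NormedSpace ℝ E]

/-!
The inversion `x ↦ x / ‖x‖²` divides `|x - y|` by `‖x‖‖y‖`. On a cone (a set invariant under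
positive dilations) the boundary distance is positively homogeneous, so the inversion divides
`d_G(x)` by `‖x‖²` and `d_G(y)` by `‖y‖²`. Hence numerator and radicand of `p_G` are scaled by
`1 / (‖x‖‖y‖)` and its square respectively, and the quotient is unchanged.
-/

open EuclideanGeometry Pointwise

theorem frontier_smul₀ {G₀ α : Type*} [GroupWithZero G₀] [MulAction G₀ α] [TopologicalSpace α]
    [ContinuousConstSMul G₀ α] {c : G₀} (hc : c ≠ 0) (s : Set α) :
    frontier (c • s) = c • frontier s := by
  simp only [frontier, closure_smul₀' hc, interior_smul₀ hc, Set.smul_set_sdiff₀ hc]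

theorem dG_smul_of_smul_eq {G : Set E} {c : ℝ} (hc : 0 < c) (hG : c • G = G) (x : E) :
    dG G (c • x) = c * dG G x := by
  calc dG G (c • x) = infDist (c • x) (c • frontier G) := by
        rw [← frontier_smul₀ hc.ne', hG, dG]
    _ = c * dG G x := by rw [infDist_smul₀ hc.ne', Real.norm_of_nonneg hc.le, dG]

section Inversion

variable {V : Type*} [NormedAddCommGroup V] [InnerProductSpace ℝ V]

theorem inversion_zero_one (x : V) : inversion 0 1 x = (‖x‖ ^ 2)⁻¹ • x := by
  simp [inversion]

theorem dist_inversion_zero_one {x y : V} (hx : x ≠ 0) (hy : y ≠ 0) :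
    dist (inversion 0 1 x) (inversion 0 1 y) = dist x y / (‖x‖ * ‖y‖) := by
  rw [dist_inversion_inversion hx hy, dist_zero_right, dist_zero_right, one_pow, one_div,
    inv_mul_eq_div]

theorem dG_inversion_zero_one {G : Set V} (hG : ∀ c : ℝ, 0 < c → c • G = G) {x : V}
    (hx : x ≠ 0) : dG G (inversion 0 1 x) = dG G x / ‖x‖ ^ 2 := by
  have hc : 0 < (‖x‖ ^ 2)⁻¹ := by positivity
  rw [inversion_zero_one, dG_smul_of_smul_eq hc (hG _ hc), inv_mul_eq_div]

theorem pG_inversion_zero_one {G : Set V} (hG : ∀ c : ℝ, 0 < c → c • G = G) {x y : V}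
    (hx : x ≠ 0) (hy : y ≠ 0) :
    pG G (inversion 0 1 x) (inversion 0 1 y) = pG G x y := by
  have ha : 0 < ‖x‖ := norm_pos_iff.mpr hx
  have hb : 0 < ‖y‖ := norm_pos_iff.mpr hy
  set k := (‖x‖ * ‖y‖)⁻¹ with hk
  have hk0 : 0 < k := by positivity
  have hradicand : (dist x y / (‖x‖ * ‖y‖)) ^ 2
      + 4 * (dG G x / ‖x‖ ^ 2) * (dG G y / ‖y‖ ^ 2)
      = k ^ 2 * (dist x y ^ 2 + 4 * dG G x * dG G y) := by
    rw [hk]; field_simp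
  rw [pG, pG, dist_inversion_zero_one hx hy, dG_inversion_zero_one hG hx,
    dG_inversion_zero_one hG hy, hradicand, Real.sqrt_mul (sq_nonneg k),
    Real.sqrt_sq hk0.le, div_eq_inv_mul (dist x y), ← hk]
  exact mul_div_mul_left _ _ hk0.ne'

end Inversion

theorem smul_sector {θ c : ℝ} (hc : 0 < c) : c • Sector θ = Sector θ := by
  have mem : ∀ {c : ℝ}, 0 < c → ∀ {z}, z ∈ Sector θ → c • z ∈ Sector θ := by
    rintro c hc _ ⟨r, hr, φ, hφ₀, hφθ, rfl⟩
    exact ⟨c * r, by positivity, φ, hφ₀, hφθ, by push_cast [Complex.real_smul]; ring⟩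
  refine Subset.antisymm (smul_set_subset_iff.mpr fun z hz => mem hc hz) fun z hz => ?_
  exact ⟨c⁻¹ • z, mem (inv_pos.mpr hc) hz, smul_inv_smul₀ hc.ne' z⟩

theorem ne_zero_of_mem_sector {θ : ℝ} {z : ℂ} (hz : z ∈ Sector θ) : z ≠ 0 := by
  obtain ⟨r, hr, φ, -, -, rfl⟩ := hz
  exact mul_ne_zero (Complex.ofReal_ne_zero.mpr hr.ne') (Complex.exp_ne_zero _)

theorem div_norm_sq_eq_inversion (z : ℂ) : z / ((‖z‖ : ℂ) ^ 2) = inversion 0 1 z := by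
  rw [inversion_zero_one, Complex.real_smul]
  push_cast
  ring

theorem pG_sector_inversion_invariant_general (θ : ℝ)
    (x y : ℂ) (hx : x ∈ Sector θ) (hy : y ∈ Sector θ) :
    pG (Sector θ) (x / ((‖x‖ : ℂ) ^ 2)) (y / ((‖y‖ : ℂ) ^ 2))
      = pG (Sector θ) x y := by
  rw [div_norm_sq_eq_inversion, div_norm_sq_eq_inversion]
  exact pG_inversion_zero_one (fun c hc => smul_sector hc) (ne_zero_of_mem_sector hx)
    (ne_zero_of_mem_sector hy)

/-- For `0 < θ < 2π`, the point pair function on `S_θ` is invariant under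
`f(x) = x / |x|²`. -/
theorem pG_sector_inversion_invariant (θ : ℝ) (hθ₁ : 0 < θ) (hθ₂ : θ < 2 * Real.pi)
    (x y : ℂ) (hx : x ∈ Sector θ) (hy : y ∈ Sector θ) :
    pG (Sector θ) (x / ((‖x‖ : ℂ) ^ 2)) (y / ((‖y‖ : ℂ) ^ 2))
      = pG (Sector θ) x y :=
  pG_sector_inversion_invariant_general θ x y hx hy
end

section
/- If G ⊊ ℝⁿ is a domain such that s_G(x,y) ≥ p_G(x,y) for all x, y ∈ G, then the complement ℝⁿ∖G is a convex (hence connected) set. -/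
open Metric Set

variable {E : Type*} [NormedAddCommGroup E] [NormedSpace ℝ E]

/-!
By Motzkin's theorem, a closed subset of `ℝⁿ` is convex as soon as every point has a unique nearest
point in it. So if `ℝⁿ ∖ G` is not convex, some `m ∈ G` has two nearest points `z₁ ≠ z₂` in it;
they lie on `∂G`, and the ball `B(m, R)`, `R = d_G(m)`, lies in `G` and touches `∂G` at both.
The points `x`, `y` a quarter of the way from `m` to `z₁`, `z₂` then have `d_G(x), d_G(y) ≤ 3R/4`,
while every `z ∈ ∂G` has `|x - z| + |z - y| ≥ 2 (R - |m - (x + y)/2|)`, and these two bounds give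
`s_G(x, y) < p_G(x, y)`.
-/

open Filter Topology
open scoped RealInnerProductSpace

theorem continuous_of_unique_nearest {α : Type*} [MetricSpace α] [ProperSpace α] {K : Set α}
    (hK : IsClosed K) {P : α → α} (hPK : ∀ x, P x ∈ K) (hP : ∀ x, dist x (P x) = infDist x K)
    (huniq : ∀ x, ∀ w ∈ K, dist x w = infDist x K → w = P x) : Continuous P := by
  refine continuous_iff_continuousAt.2 fun x => ?_
  have hnear : ∀ ε > 0, ∀ᶠ y in 𝓝 x, P y ∈ closedBall x (infDist x K + ε) := by
    intro ε hε
    filter_upwards [ball_mem_nhds x (half_pos hε)] with y hy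
    rw [mem_ball] at hy
    rw [mem_closedBall]
    calc dist (P y) x ≤ dist y (P y) + dist y x := dist_triangle_left _ _ _
      _ ≤ infDist x K + dist y x + dist y x := by
        rw [hP]; gcongr; exact infDist_le_infDist_add_dist
      _ ≤ infDist x K + ε := by linarith
  refine (isCompact_closedBall x _).tendsto_nhds_of_unique_mapClusterPt (hnear 1 one_pos)
    fun w _ hw => huniq x w (hK.mem_of_mapClusterPt hw (.of_forall hPK)) ?_
  refine le_antisymm (le_of_forall_pos_le_add fun ε hε => ?_)
    (infDist_le_dist_of_mem (hK.mem_of_mapClusterPt hw (.of_forall hPK)))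
  rw [dist_comm, ← mem_closedBall]
  exact isClosed_closedBall.mem_of_mapClusterPt hw (hnear ε hε)

section Asplund

variable {F : Type*} [NormedAddCommGroup F]

/-- Asplund's function of `K`, the supremum of `z ↦ ⟪z, k⟫ - ‖k‖² / 2` over `k ∈ K`. -/
noncomputable def asplund (K : Set F) (z : F) : ℝ := (‖z‖ ^ 2 - infDist z K ^ 2) / 2

theorem continuous_asplund (K : Set F) : Continuous (asplund K) := by
  unfold asplund; fun_prop

variable [InnerProductSpace ℝ F]

theorem hasFDerivAt_of_subgradient {f : F → ℝ} {g : F → F}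
    (hsub : ∀ u v, f u + ⟪v - u, g u⟫ ≤ f v) {x : F} (hg : ContinuousAt g x) :
    HasFDerivAt f (innerSL ℝ (g x)) x := by
  rw [hasFDerivAt_iff_isLittleO_nhds_zero, Asymptotics.isLittleO_iff]
  intro C hC
  have hg' : ∀ᶠ h in 𝓝 (0 : F), ‖g (x + h) - g x‖ ≤ C := by
    have : Tendsto (fun h => g (x + h)) (𝓝 0) (𝓝 (g x)) :=
      hg.tendsto.comp (by simpa using (continuous_const_add x).tendsto (0 : F))
    filter_upwards [this (closedBall_mem_nhds _ hC)] with h hh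
    simpa [dist_eq_norm] using hh
  filter_upwards [hg'] with h hh
  have hlow := hsub x (x + h)
  have hup := hsub (x + h) x
  simp only [add_sub_cancel_left, sub_add_cancel_left, inner_neg_left] at hlow hup
  have hcs : ⟪h, g (x + h) - g x⟫ ≤ ‖h‖ * C :=
    (real_inner_le_norm _ _).trans (mul_le_mul_of_nonneg_left hh (norm_nonneg h))
  rw [inner_sub_right] at hcs
  rw [innerSL_apply_apply, real_inner_comm, Real.norm_eq_abs, abs_le]
  constructor <;> linarith

theorem inner_sub_half_sq_le_asplund {K : Set F} {k : F} (hk : k ∈ K) (z : F) :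
    ⟪z, k⟫ - ‖k‖ ^ 2 / 2 ≤ asplund K z := by
  have h : infDist z K ^ 2 ≤ ‖z - k‖ ^ 2 := by
    gcongr
    · exact infDist_nonneg
    · rw [← dist_eq_norm]; exact infDist_le_dist_of_mem hk
  rw [@norm_sub_sq_real] at h
  rw [asplund]
  linarith

theorem asplund_eq_of_dist_eq {K : Set F} {z w : F} (hw : dist z w = infDist z K) :
    asplund K z = ⟪z, w⟫ - ‖w‖ ^ 2 / 2 := by
  rw [asplund, ← hw, dist_eq_norm, @norm_sub_sq_real]
  ring

theorem neg_le_asplund_sub_inner_combo {K : Set F} {p q : F} (hp : p ∈ K) (hq : q ∈ K) {a b : ℝ}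
    (ha : 0 ≤ a) (hb : 0 ≤ b) (hab : a + b = 1) (z : F) :
    -((a * ‖p‖ ^ 2 + b * ‖q‖ ^ 2) / 2) ≤ asplund K z - ⟪a • p + b • q, z⟫ := by
  have hp' := mul_le_mul_of_nonneg_left (inner_sub_half_sq_le_asplund hp z) ha
  have hq' := mul_le_mul_of_nonneg_left (inner_sub_half_sq_le_asplund hq z) hb
  rw [inner_add_left, real_inner_smul_left, real_inner_smul_left, real_inner_comm z p,
    real_inner_comm z q]
  linear_combination hp' + hq' + asplund K z * hab

theorem hasFDerivAt_asplund {K : Set F} {P : F → F} (hPK : ∀ x, P x ∈ K)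
    (hP : ∀ x, dist x (P x) = infDist x K) {x : F} (hPx : ContinuousAt P x) :
    HasFDerivAt (asplund K) (innerSL ℝ (P x)) x := by
  refine hasFDerivAt_of_subgradient (fun u v => ?_) hPx
  rw [asplund_eq_of_dist_eq (hP u), inner_sub_left]
  linarith [inner_sub_half_sq_le_asplund (hPK u) v]

theorem exists_sub_nearest_eq_smul [ProperSpace F] {K : Set F} {P : F → F} (hPK : ∀ x, P x ∈ K)
    (hP : ∀ x, dist x (P x) = infDist x K) (hPc : Continuous P) {m : F} {c : ℝ}
    (hc : ∀ z, -c ≤ asplund K z - ⟪m, z⟫) {ε : ℝ} (hε : 0 < ε) :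
    ∃ x, m - P x = ε • (x - m) ∧ ε * ‖x - m‖ ^ 2 ≤ 2 * c - infDist m K ^ 2 := by
  set θ : F → ℝ := fun z => asplund K z - ⟪m, z⟫ + ε / 2 * ‖z - m‖ ^ 2
  have hθc : Continuous θ := by have := continuous_asplund K; fun_prop
  have hθlim : Tendsto θ (cocompact F) atTop := by
    have hdist := (tendsto_pow_atTop two_ne_zero).comp (tendsto_dist_right_cocompact_atTop m)
    have hsq : Tendsto (fun z => ε / 2 * dist z m ^ 2 + -c) (cocompact F) atTop :=
      tendsto_atTop_add_const_right _ _ (hdist.const_mul_atTop (half_pos hε))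
    refine tendsto_atTop_mono (fun z => ?_) hsq
    simp only [θ, dist_eq_norm]
    linarith [hc z]
  obtain ⟨x, hx⟩ := hθc.exists_forall_le hθlim
  have hderiv : HasFDerivAt θ (innerSL ℝ (P x - m + ε • (x - m))) x := by
    have h : HasFDerivAt θ _ x :=
      ((hasFDerivAt_asplund hPK hP hPc.continuousAt).sub (innerSL ℝ m).hasFDerivAt).add
        (((hasFDerivAt_id x).sub_const m).norm_sq.const_mul (ε / 2))
    refine h.congr_fderiv ?_
    ext v
    simp only [map_add, map_sub, map_smul, add_apply, sub_apply, smul_apply, coe_innerSL_apply,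
      ContinuousLinearMap.comp_id, id_eq, nsmul_eq_mul, smul_eq_mul]
    ring
  have hgrad : P x - m + ε • (x - m) = 0 := by
    rw [← norm_eq_zero, ← innerSL_apply_norm ℝ,
      IsLocalMin.hasFDerivAt_eq_zero (.of_forall hx) hderiv, norm_zero]
  refine ⟨x, by linear_combination (norm := module) -hgrad, ?_⟩
  have hxm := hx m
  simp only [θ, sub_self, norm_zero, asplund, real_inner_self_eq_norm_sq] at hxm
  have hcx := hc x
  rw [asplund] at hcx
  nlinarith [sq_nonneg ‖m‖]

/-- Motzkin's theorem. If `m = a • p + b • q ∉ K`, minimising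
`asplund K - ⟪m, ·⟫ + (ε / 2) ‖· - m‖²` yields `x` with `m - P x = ε • (x - m)`, which for small `ε`
puts a point of `K` closer to `m` than `infDist m K`. -/
theorem convex_of_unique_nearest [ProperSpace F] {K : Set F} (hK : IsClosed K)
    (huniq : ∀ x, ∀ w₁ ∈ K, ∀ w₂ ∈ K,
      dist x w₁ = infDist x K → dist x w₂ = infDist x K → w₁ = w₂) :
    Convex ℝ K := by
  intro p hp q hq a b ha hb hab
  by_contra hm
  choose P hPK hP using fun x => hK.exists_infDist_eq_dist ⟨p, hp⟩ x
  replace hP : ∀ x, dist x (P x) = infDist x K := fun x => (hP x).symm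
  have hPc : Continuous P := continuous_of_unique_nearest hK hPK hP
    fun x w hw hd => huniq x w hw (P x) (hPK x) hd (hP x)
  set m := a • p + b • q
  set δ := infDist m K
  have hδ : 0 < δ := (hK.notMem_iff_infDist_pos ⟨p, hp⟩).1 hm
  set c := (a * ‖p‖ ^ 2 + b * ‖q‖ ^ 2) / 2
  have hc : 0 ≤ c := by positivity
  set ε := δ ^ 2 / (2 * c + 1)
  have hε : 0 < ε := by positivity
  obtain ⟨x, hx, hxm⟩ : ∃ x, m - P x = ε • (x - m) ∧ ε * ‖x - m‖ ^ 2 ≤ 2 * c - δ ^ 2 :=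
    exists_sub_nearest_eq_smul hPK hP hPc
    (neg_le_asplund_sub_inner_combo hp hq ha hb hab) hε
  have hδx : δ ≤ ε * ‖x - m‖ := by
    calc δ ≤ dist m (P x) := infDist_le_dist_of_mem (hPK x)
      _ = ε * ‖x - m‖ := by rw [dist_eq_norm, hx, norm_smul, Real.norm_of_nonneg hε.le]
  have hεc : ε * (2 * c) < δ ^ 2 := by
    rw [div_mul_eq_mul_div, div_lt_iff₀ (by positivity)]
    nlinarith
  nlinarith [mul_le_mul hδx hδx hδ.le (by positivity), mul_le_mul_of_nonneg_left hxm hε.le]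

end Asplund

section TwoContact

theorem sG_le_of_dG_sub_dist_midpoint_pos {G : Set E} (hG : (frontier G).Nonempty) {m x y : E}
    (hpos : 0 < dG G m - dist m (midpoint ℝ x y)) :
    sG G x y ≤ dist x y / (2 * (dG G m - dist m (midpoint ℝ x y))) := by
  have : Nonempty (frontier G) := hG.to_subtype
  refine div_le_div_of_nonneg_left dist_nonneg (by positivity) (le_ciInf fun z => ?_)
  have hmid : dist (midpoint ℝ x y) z ≤ (dist x z + dist y z) / 2 := by
    simpa using dist_midpoint_midpoint_le x y (z : E) z
  have hm : dG G m ≤ dist m z := infDist_le_dist_of_mem z.2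
  linarith [dist_triangle m (midpoint ℝ x y) z, dist_comm (z : E) y]

theorem mem_frontier_of_dist_eq_infDist_compl {G : Set E} {m w : E} (hm : m ∈ G) (hw : w ∉ G)
    (hd : dist m w = infDist m Gᶜ) : w ∈ frontier G := by
  rw [frontier_eq_closure_inter_closure]
  refine ⟨?_, subset_closure hw⟩
  have hr : dist m w ≠ 0 := dist_ne_zero.2 (ne_of_mem_of_not_mem hm hw)
  have hw' : w ∈ closure (ball m (dist m w)) := by
    rw [closure_ball m hr, mem_closedBall, dist_comm]
  exact closure_mono (hd ▸ ball_infDist_compl_subset) hw'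

variable {F : Type*} [NormedAddCommGroup F]

theorem div_sqrt_le_pG (G : Set F) {x y : F} {a b : ℝ} (ha : dG G x ≤ a) (hb : dG G y ≤ b) :
    dist x y / √(dist x y ^ 2 + 4 * a * b) ≤ pG G x y := by
  rcases eq_or_ne x y with rfl | hxy
  · simp [pG]
  have hx : 0 ≤ dG G x := infDist_nonneg
  have hy : 0 ≤ dG G y := infDist_nonneg
  have hpos : 0 < dist x y ^ 2 + 4 * dG G x * dG G y := by
    have := dist_pos.2 hxy
    positivity
  refine div_le_div_of_nonneg_left dist_nonneg (Real.sqrt_pos.2 hpos) (Real.sqrt_le_sqrt ?_)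
  have := mul_le_mul ha hb hy (hx.trans ha)
  nlinarith

theorem dG_eq_infDist_compl {G : Set F} {m w : F} (hw : w ∈ frontier G)
    (hd : dist m w = infDist m Gᶜ) : dG G m = infDist m Gᶜ := by
  refine le_antisymm ((infDist_le_dist_of_mem hw).trans_eq hd) ?_
  rw [← infDist_closure]
  exact infDist_le_infDist_of_subset (frontier_compl G ▸ frontier_subset_closure) ⟨w, hw⟩

variable [InnerProductSpace ℝ F]

theorem quarter_chord_ratio_lt {R c e : ℝ} (hR : 0 < R) (hc : 0 < c) (he : 0 ≤ e)
    (hpar : e ^ 2 + c ^ 2 = 4 * R ^ 2) :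
    c / 4 / (2 * (R - e / 8)) < c / 4 / √((c / 4) ^ 2 + 4 * (3 / 4 * R) * (3 / 4 * R)) := by
  have heR : e < 2 * R := by nlinarith
  have hsq : (c / 4) ^ 2 + 4 * (3 / 4 * R) * (3 / 4 * R) < (2 * (R - e / 8)) ^ 2 := by nlinarith
  refine div_lt_div_of_pos_left (by positivity) (Real.sqrt_pos.2 (by positivity)) ?_
  exact (Real.sqrt_lt' (by linarith)).2 hsq

theorem exists_sG_lt_pG_of_two_contact {G : Set F} {m z₁ z₂ : F} (hz₁ : z₁ ∈ frontier G)
    (hz₂ : z₂ ∈ frontier G) (hne : z₁ ≠ z₂) (hd₁ : dist m z₁ = dG G m)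
    (hd₂ : dist m z₂ = dG G m) (hball : ball m (dG G m) ⊆ G) :
    ∃ x ∈ G, ∃ y ∈ G, sG G x y < pG G x y := by
  set R := dG G m
  set u₁ := z₁ - m
  set u₂ := z₂ - m
  have hu₁ : ‖u₁‖ = R := by rw [← hd₁, dist_comm, dist_eq_norm]
  have hu₂ : ‖u₂‖ = R := by rw [← hd₂, dist_comm, dist_eq_norm]
  set x := m + (4⁻¹ : ℝ) • u₁
  set y := m + (4⁻¹ : ℝ) • u₂
  have hR : 0 < R := infDist_nonneg.lt_of_ne fun h => hne <|
    (dist_eq_zero.1 (hd₁.trans h.symm)).symm.trans (dist_eq_zero.1 (hd₂.trans h.symm))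
  have hxG : x ∈ G := hball <| by
    rw [mem_ball, dist_eq_norm, add_sub_cancel_left, norm_smul, hu₁]; norm_num; linarith
  have hyG : y ∈ G := hball <| by
    rw [mem_ball, dist_eq_norm, add_sub_cancel_left, norm_smul, hu₂]; norm_num; linarith
  have hxy : dist x y = ‖u₁ - u₂‖ / 4 := by
    rw [dist_eq_norm, show x - y = (4⁻¹ : ℝ) • (u₁ - u₂) by module, norm_smul]
    norm_num
    ring
  have hmid : dist m (midpoint ℝ x y) = ‖u₁ + u₂‖ / 8 := by
    rw [dist_eq_norm, midpoint_eq_smul_add, invOf_eq_inv,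
      show m - (2⁻¹ : ℝ) • (x + y) = (-8⁻¹ : ℝ) • (u₁ + u₂) by simp only [x, y]; module, norm_smul]
    norm_num
    ring
  have hdx : dG G x ≤ 3 / 4 * R := by
    refine (infDist_le_dist_of_mem hz₁).trans_eq ?_
    rw [dist_eq_norm, show x - z₁ = (-(3 / 4) : ℝ) • u₁ by simp only [x, u₁]; module, norm_smul,
      hu₁]
    norm_num
  have hdy : dG G y ≤ 3 / 4 * R := by
    refine (infDist_le_dist_of_mem hz₂).trans_eq ?_
    rw [dist_eq_norm, show y - z₂ = (-(3 / 4) : ℝ) • u₂ by simp only [y, u₂]; module, norm_smul,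
      hu₂]
    norm_num
  have hpar : ‖u₁ + u₂‖ ^ 2 + ‖u₁ - u₂‖ ^ 2 = 4 * R ^ 2 := by
    have := parallelogram_law_with_norm ℝ u₁ u₂
    rw [hu₁, hu₂] at this
    linarith
  have hsum : ‖u₁ + u₂‖ ≤ 2 * R := by linarith [norm_add_le u₁ u₂]
  refine ⟨x, hxG, y, hyG, ?_⟩
  calc sG G x y ≤ dist x y / (2 * (R - dist m (midpoint ℝ x y))) :=
        sG_le_of_dG_sub_dist_midpoint_pos ⟨z₁, hz₁⟩ (by rw [hmid]; linarith)
    _ < dist x y / √(dist x y ^ 2 + 4 * (3 / 4 * R) * (3 / 4 * R)) := by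
        rw [hxy, hmid]
        refine quarter_chord_ratio_lt hR (norm_pos_iff.2 (sub_ne_zero.2 fun h => hne ?_))
          (norm_nonneg _) hpar
        simpa [u₁, u₂] using h
    _ ≤ pG G x y := div_sqrt_le_pG G hdx hdy

theorem exists_sG_lt_pG_of_two_nearest_compl {G : Set F} {m w₁ w₂ : F} (hw₁ : w₁ ∉ G)
    (hw₂ : w₂ ∉ G) (hne : w₁ ≠ w₂) (hd₁ : dist m w₁ = infDist m Gᶜ)
    (hd₂ : dist m w₂ = infDist m Gᶜ) : ∃ x ∈ G, ∃ y ∈ G, sG G x y < pG G x y := by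
  have hm : m ∈ G := by
    by_contra hm
    rw [infDist_zero_of_mem hm] at hd₁ hd₂
    exact hne ((dist_eq_zero.1 hd₁).symm.trans (dist_eq_zero.1 hd₂))
  have hfr₁ := mem_frontier_of_dist_eq_infDist_compl hm hw₁ hd₁
  have hfr₂ := mem_frontier_of_dist_eq_infDist_compl hm hw₂ hd₂
  have hdG := dG_eq_infDist_compl hfr₁ hd₁
  exact exists_sG_lt_pG_of_two_contact hfr₁ hfr₂ hne (hd₁.trans hdG.symm) (hd₂.trans hdG.symm)
    (hdG ▸ ball_infDist_compl_subset)

end TwoContact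

theorem complement_convex_of_p_le_s_general (n : ℕ) (G : Set (EuclideanSpace ℝ (Fin n)))
    (hGopen : IsOpen G) (hGne : G ≠ Set.univ)
    (h : ∀ x ∈ G, ∀ y ∈ G, pG G x y ≤ sG G x y) :
    Convex ℝ Gᶜ ∧ IsConnected Gᶜ := by
  have hconv : Convex ℝ Gᶜ := convex_of_unique_nearest hGopen.isClosed_compl
    fun m w₁ hw₁ w₂ hw₂ hd₁ hd₂ => by
      by_contra hne
      obtain ⟨x, hx, y, hy, hlt⟩ := exists_sG_lt_pG_of_two_nearest_compl hw₁ hw₂ hne hd₁ hd₂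
      exact (h x hx y hy).not_gt hlt
  exact ⟨hconv, hconv.isConnected (nonempty_compl.2 hGne)⟩

/-- If `G ⊊ ℝⁿ` is a domain with `s_G(x,y) ≥ p_G(x,y)` for all `x, y ∈ G`, then the
complement `ℝⁿ ∖ G` is convex (hence connected). -/
theorem complement_convex_of_p_le_s (n : ℕ) (G : Set (EuclideanSpace ℝ (Fin n)))
    (hGopen : IsOpen G) (hGconn : IsConnected G) (hGne : G ≠ Set.univ)
    (h : ∀ x ∈ G, ∀ y ∈ G, pG G x y ≤ sG G x y) :
    Convex ℝ Gᶜ ∧ IsConnected Gᶜ :=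
  complement_convex_of_p_le_s_general n G hGopen hGne h
end

section
/- In the convex square-like domain G = {z ∈ ℂ : −1 < Re z < 1, 0 < Im z < 1}, with x = 1/2 + k + i/2, y = −1/2 + i/2, z = −1/2 − k + i/2 for 0 < k < 1/3, one has w_G(x,y) = (1+k)/√(1+(1+k)²), w_G(x,z) = (1+2k)/2, w_G(z,y) = k/(1−k), and the quotient w_G(x,y)/(w_G(x,z)+w_G(z,y)) tends to √2 as k → 0⁺; hence w_G is not a metric and the quasi-metric constant √2 is sharp for arbitrary convex domains. -/
open Metric Set

variable {E : Type*} [NormedAddCommGroup E] [NormedSpace ℝ E]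

/-- The convex domain `{z : −1 < Re z < 1, 0 < Im z < 1}`. -/
def Sq : Set ℂ := {z | -1 < z.re ∧ z.re < 1 ∧ 0 < z.im ∧ z.im < 1}

/-! A point of `X̃` is the reflection `2m - x` of `x` in a nearest boundary point `m`. In the
rectangle the nearest boundary points of `x` are the feet of the perpendiculars to its closest
sides, so `X̃` consists of the mirror images of `x` in those sides: a single point for
`x = 1/2 + k + i/2` and `z = -1/2 - k + i/2`, but three points for `y = -1/2 + i/2`, which is
equidistant from three sides. The three values of `w` are then elementary distance computations,
and as `k → 0⁺` the quotient tends to `(1/√2) / (1/2) = √2`. -/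

def nearestFrontier (G : Set E) (x : E) : Set E := {m ∈ frontier G | dist x m = dG G x}

theorem Xt_eq_image_nearestFrontier (G : Set E) (x : E) :
    Xt G x = (fun m => (2 : ℝ) • m - x) '' nearestFrontier G x := by
  ext x'
  constructor
  · rintro ⟨hd, hm⟩
    refine ⟨(2⁻¹ : ℝ) • (x + x'), ⟨hm, ?_⟩, ?_⟩
    · rw [dist_eq_norm, show x - (2⁻¹ : ℝ) • (x + x') = (2⁻¹ : ℝ) • (x - x') by module,
        norm_smul, ← dist_eq_norm, hd]
      norm_num
      ring
    · simp only [smul_smul]; norm_num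
  · rintro ⟨m, ⟨hm, hd⟩, rfl⟩
    refine ⟨?_, ?_⟩
    · rw [dist_eq_norm, show x - ((2 : ℝ) • m - x) = (2 : ℝ) • (x - m) by module,
        norm_smul, ← dist_eq_norm, hd]
      norm_num
    · convert hm using 1
      module

theorem Metric.infDist_insert {α : Type*} [PseudoMetricSpace α] {s : Set α} (hs : s.Nonempty)
    (x y : α) :
    infDist x (insert y s) = min (dist x y) (infDist x s) := by
  rw [infDist, insert_eq, infEDist_union, infEDist_singleton,
    ENNReal.toReal_min (edist_ne_top _ _) (infEDist_ne_top hs), ← dist_edist, infDist]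

namespace Complex

theorem dist_mk_of_im_eq (a a' b : ℝ) : dist (⟨a, b⟩ : ℂ) ⟨a', b⟩ = |a - a'| := by
  simp [dist_mk, Real.sqrt_sq_eq_abs]

theorem dist_mk_of_re_eq (a b b' : ℝ) : dist (⟨a, b⟩ : ℂ) ⟨a, b'⟩ = |b - b'| := by
  simp [dist_mk, Real.sqrt_sq_eq_abs]

theorem abs_re_sub_le_dist (z w : ℂ) : |z.re - w.re| ≤ dist z w := by
  simpa [dist_eq] using abs_re_le_norm (z - w)

theorem abs_im_sub_le_dist (z w : ℂ) : |z.im - w.im| ≤ dist z w := by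
  simpa [dist_eq] using abs_im_le_norm (z - w)

theorem im_eq_of_dist_le_abs_re_sub {z w : ℂ} (h : dist z w ≤ |z.re - w.re|) : z.im = w.im := by
  rw [dist_eq_re_im, ← Real.sqrt_sq_eq_abs, Real.sqrt_le_sqrt_iff (sq_nonneg _)] at h
  nlinarith [sq_nonneg (z.im - w.im)]

theorem re_eq_of_dist_le_abs_im_sub {z w : ℂ} (h : dist z w ≤ |z.im - w.im|) : z.re = w.re := by
  rw [dist_eq_re_im, ← Real.sqrt_sq_eq_abs, Real.sqrt_le_sqrt_iff (sq_nonneg _)] at h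
  nlinarith [sq_nonneg (z.re - w.re)]

theorem two_smul_sub_mk (m : ℂ) (a b : ℝ) :
    (2 : ℝ) • m - ⟨a, b⟩ = ⟨2 * m.re - a, 2 * m.im - b⟩ := by
  apply Complex.ext <;> simp

end Complex

open Complex

theorem Sq_eq_reProdIm : Sq = Ioo (-1) 1 ×ℂ Ioo 0 1 := by
  ext z
  simp [Sq, mem_reProdIm, and_assoc]

theorem mem_frontier_Sq {m : ℂ} : m ∈ frontier Sq ↔
    (m.re ∈ Icc (-1) 1 ∧ (m.im = 0 ∨ m.im = 1)) ∨ ((m.re = -1 ∨ m.re = 1) ∧ m.im ∈ Icc 0 1) := by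
  rw [Sq_eq_reProdIm, frontier_reProdIm, closure_Ioo (by norm_num), closure_Ioo (by norm_num),
    frontier_Ioo (by norm_num), frontier_Ioo (by norm_num)]
  simp [mem_reProdIm]

theorem mk_mem_frontier_Sq {a b : ℝ} (hp : (⟨a, b⟩ : ℂ) ∈ Sq) :
    (⟨1, b⟩ : ℂ) ∈ frontier Sq ∧ (⟨-1, b⟩ : ℂ) ∈ frontier Sq ∧
      (⟨a, 0⟩ : ℂ) ∈ frontier Sq ∧ (⟨a, 1⟩ : ℂ) ∈ frontier Sq := by
  obtain ⟨h1, h2, h3, h4⟩ := hp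
  have ha : a ∈ Icc (-1) 1 := ⟨h1.le, h2.le⟩
  have hb : b ∈ Icc 0 1 := ⟨h3.le, h4.le⟩
  exact ⟨mem_frontier_Sq.2 (Or.inr ⟨Or.inr rfl, hb⟩), mem_frontier_Sq.2 (Or.inr ⟨Or.inl rfl, hb⟩),
    mem_frontier_Sq.2 (Or.inl ⟨ha, Or.inl rfl⟩), mem_frontier_Sq.2 (Or.inl ⟨ha, Or.inr rfl⟩)⟩

theorem dG_Sq {a b : ℝ} (hp : (⟨a, b⟩ : ℂ) ∈ Sq) :
    dG Sq ⟨a, b⟩ = min (min (1 - a) (1 + a)) (min b (1 - b)) := by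
  obtain ⟨f1, f2, f3, f4⟩ := mk_mem_frontier_Sq hp
  obtain ⟨h1, h2, h3, h4⟩ := hp
  dsimp only at h1 h2 h3 h4
  apply le_antisymm
  · have foot {m : ℂ} (hm : m ∈ frontier Sq) {d : ℝ} (h : dist ⟨a, b⟩ m = d) :
        dG Sq ⟨a, b⟩ ≤ d :=
      h ▸ infDist_le_dist_of_mem hm
    refine le_min (le_min (foot f1 ?_) (foot f2 ?_)) (le_min (foot f3 ?_) (foot f4 ?_))
    · rw [dist_mk_of_im_eq, abs_of_neg (by linarith)]; ring
    · rw [dist_mk_of_im_eq, abs_of_pos (by linarith)]; ring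
    · rw [dist_mk_of_re_eq, abs_of_pos (by linarith)]; ring
    · rw [dist_mk_of_re_eq, abs_of_neg (by linarith)]; ring
  · refine (le_infDist ⟨_, f1⟩).2 fun m hm => ?_
    have hre := abs_le.1 (abs_re_sub_le_dist ⟨a, b⟩ m)
    have him := abs_le.1 (abs_im_sub_le_dist ⟨a, b⟩ m)
    dsimp only at hre him
    rcases mem_frontier_Sq.1 hm with ⟨-, hm | hm⟩ | ⟨hm | hm, -⟩
    · exact min_le_of_right_le (min_le_of_left_le (by linarith))
    · exact min_le_of_right_le (min_le_of_right_le (by linarith))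
    · exact min_le_of_left_le (min_le_of_right_le (by linarith))
    · exact min_le_of_left_le (min_le_of_left_le (by linarith))

theorem nearestFrontier_Sq {a b : ℝ} (hp : (⟨a, b⟩ : ℂ) ∈ Sq) :
    nearestFrontier Sq ⟨a, b⟩ = {m | (1 - a = dG Sq ⟨a, b⟩ ∧ m = ⟨1, b⟩) ∨
      (1 + a = dG Sq ⟨a, b⟩ ∧ m = ⟨-1, b⟩) ∨ (b = dG Sq ⟨a, b⟩ ∧ m = ⟨a, 0⟩) ∨
      (1 - b = dG Sq ⟨a, b⟩ ∧ m = ⟨a, 1⟩)} := by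
  obtain ⟨f1, f2, f3, f4⟩ := mk_mem_frontier_Sq hp
  have hd := dG_Sq hp
  obtain ⟨h1, h2, h3, h4⟩ := hp
  dsimp only at h1 h2 h3 h4
  have hd1 : dG Sq ⟨a, b⟩ ≤ 1 - a := hd ▸ min_le_of_left_le (min_le_left _ _)
  have hd2 : dG Sq ⟨a, b⟩ ≤ 1 + a := hd ▸ min_le_of_left_le (min_le_right _ _)
  have hd3 : dG Sq ⟨a, b⟩ ≤ b := hd ▸ min_le_of_right_le (min_le_left _ _)
  have hd4 : dG Sq ⟨a, b⟩ ≤ 1 - b := hd ▸ min_le_of_right_le (min_le_right _ _)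
  ext ⟨c, e⟩
  simp only [nearestFrontier, mem_ofPred_eq, Complex.ext_iff]
  constructor
  · rintro ⟨hm, h⟩
    rcases mem_frontier_Sq.1 hm with ⟨-, rfl | rfl⟩ | ⟨rfl | rfl, -⟩
    · have hc : a = c := re_eq_of_dist_le_abs_im_sub (z := ⟨a, b⟩) (w := ⟨c, 0⟩)
        (by dsimp only; rw [h, abs_of_pos (by linarith)]; linarith)
      subst hc
      rw [dist_mk_of_re_eq, abs_of_pos (by linarith), sub_zero] at h
      exact Or.inr (Or.inr (Or.inl ⟨h, rfl, rfl⟩))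
    · have hc : a = c := re_eq_of_dist_le_abs_im_sub (z := ⟨a, b⟩) (w := ⟨c, 1⟩)
        (by dsimp only; rw [h, abs_of_neg (by linarith)]; linarith)
      subst hc
      rw [dist_mk_of_re_eq, abs_of_neg (by linarith), neg_sub] at h
      exact Or.inr (Or.inr (Or.inr ⟨h, rfl, rfl⟩))
    · have he : b = e := im_eq_of_dist_le_abs_re_sub (z := ⟨a, b⟩) (w := ⟨-1, e⟩)
        (by dsimp only; rw [h, abs_of_pos (by linarith)]; linarith)
      subst he
      rw [dist_mk_of_im_eq, abs_of_pos (by linarith), sub_neg_eq_add, add_comm] at h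
      exact Or.inr (Or.inl ⟨h, rfl, rfl⟩)
    · have he : b = e := im_eq_of_dist_le_abs_re_sub (z := ⟨a, b⟩) (w := ⟨1, e⟩)
        (by dsimp only; rw [h, abs_of_neg (by linarith)]; linarith)
      subst he
      rw [dist_mk_of_im_eq, abs_of_neg (by linarith), neg_sub] at h
      exact Or.inl ⟨h, rfl, rfl⟩
  · rintro (⟨h, rfl, rfl⟩ | ⟨h, rfl, rfl⟩ | ⟨h, rfl, rfl⟩ | ⟨h, rfl, rfl⟩)
    · exact ⟨f1, by rw [← h, dist_mk_of_im_eq, abs_of_neg (by linarith)]; ring⟩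
    · exact ⟨f2, by rw [← h, dist_mk_of_im_eq, abs_of_pos (by linarith)]; ring⟩
    · exact ⟨f3, by rw [← h, dist_mk_of_re_eq, abs_of_pos (by linarith)]; ring⟩
    · exact ⟨f4, by rw [← h, dist_mk_of_re_eq, abs_of_neg (by linarith)]; ring⟩

theorem Xt_Sq_of_half_lt {a : ℝ} (h1 : 1 / 2 < a) (h2 : a < 1) :
    Xt Sq ⟨a, 1 / 2⟩ = {⟨2 - a, 1 / 2⟩} := by
  have hp : (⟨a, 1 / 2⟩ : ℂ) ∈ Sq := ⟨by linarith, h2, by norm_num, by norm_num⟩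
  have hd : dG Sq ⟨a, 1 / 2⟩ = 1 - a := by
    rw [dG_Sq hp, min_eq_left (show 1 - a ≤ 1 + a by linarith)]
    exact min_eq_left (by norm_num; linarith)
  have hN : nearestFrontier Sq ⟨a, 1 / 2⟩ = {⟨1, 1 / 2⟩} := by
    ext m
    rw [nearestFrontier_Sq hp, hd, mem_ofPred_eq, mem_singleton_iff]
    constructor
    · rintro (⟨-, h⟩ | ⟨h, -⟩ | ⟨h, -⟩ | ⟨h, -⟩)
      · exact h
      all_goals exfalso; linarith
    · exact fun h => Or.inl ⟨rfl, h⟩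
  rw [Xt_eq_image_nearestFrontier, hN, image_singleton]
  simp only [two_smul_sub_mk]
  ring_nf

theorem Xt_Sq_of_lt_neg_half {a : ℝ} (h1 : -1 < a) (h2 : a < -1 / 2) :
    Xt Sq ⟨a, 1 / 2⟩ = {⟨-2 - a, 1 / 2⟩} := by
  have hp : (⟨a, 1 / 2⟩ : ℂ) ∈ Sq := ⟨h1, by linarith, by norm_num, by norm_num⟩
  have hd : dG Sq ⟨a, 1 / 2⟩ = 1 + a := by
    rw [dG_Sq hp, min_eq_right (show 1 + a ≤ 1 - a by linarith)]
    exact min_eq_left (by norm_num; linarith)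
  have hN : nearestFrontier Sq ⟨a, 1 / 2⟩ = {⟨-1, 1 / 2⟩} := by
    ext m
    rw [nearestFrontier_Sq hp, hd, mem_ofPred_eq, mem_singleton_iff]
    constructor
    · rintro (⟨h, -⟩ | ⟨-, h⟩ | ⟨h, -⟩ | ⟨h, -⟩)
      · exfalso; linarith
      · exact h
      all_goals exfalso; linarith
    · exact fun h => Or.inr (Or.inl ⟨rfl, h⟩)
  rw [Xt_eq_image_nearestFrontier, hN, image_singleton]
  simp only [two_smul_sub_mk]
  ring_nf

theorem Xt_Sq_left_center :
    Xt Sq ⟨-1 / 2, 1 / 2⟩ = {⟨-3 / 2, 1 / 2⟩, ⟨-1 / 2, -1 / 2⟩, ⟨-1 / 2, 3 / 2⟩} := by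
  have hp : (⟨-1 / 2, 1 / 2⟩ : ℂ) ∈ Sq := ⟨by norm_num, by norm_num, by norm_num, by norm_num⟩
  have hd : dG Sq ⟨-1 / 2, 1 / 2⟩ = 1 / 2 := by
    rw [dG_Sq hp]; norm_num
  have hN : nearestFrontier Sq ⟨-1 / 2, 1 / 2⟩ = {⟨-1, 1 / 2⟩, ⟨-1 / 2, 0⟩, ⟨-1 / 2, 1⟩} := by
    ext m
    rw [nearestFrontier_Sq hp, hd]
    norm_num
  rw [Xt_eq_image_nearestFrontier, hN, image_insert_eq, image_insert_eq, image_singleton]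
  simp only [two_smul_sub_mk]
  norm_num

theorem infDist_Xt_Sq_left_center (a : ℝ) :
    infDist ⟨a, 1 / 2⟩ (Xt Sq ⟨-1 / 2, 1 / 2⟩) = min |a + 3 / 2| √((a + 1 / 2) ^ 2 + 1) := by
  rw [Xt_Sq_left_center, infDist_insert (insert_nonempty _ _),
    infDist_insert (singleton_nonempty _), infDist_singleton, dist_mk_of_im_eq, dist_mk, dist_mk]
  ring_nf
  rw [min_self]

theorem wG_Sq_xy {k : ℝ} (hk0 : 0 < k) (hk : k < 1 / 3) :
    wG Sq ⟨1 / 2 + k, 1 / 2⟩ ⟨-1 / 2, 1 / 2⟩ = (1 + k) / √(1 + (1 + k) ^ 2) := by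
  have hd : dist (⟨1 / 2 + k, 1 / 2⟩ : ℂ) ⟨-1 / 2, 1 / 2⟩ = 1 + k := by
    rw [dist_mk_of_im_eq, abs_of_pos] <;> linarith
  have hx : infDist ⟨1 / 2 + k, 1 / 2⟩ (Xt Sq ⟨-1 / 2, 1 / 2⟩) = √(1 + (1 + k) ^ 2) := by
    rw [infDist_Xt_Sq_left_center, min_eq_right]
    · ring_nf
    · rw [Real.sqrt_le_iff]
      constructor
      · positivity
      · rw [sq_abs]; nlinarith
  have hy : infDist ⟨-1 / 2, 1 / 2⟩ (Xt Sq ⟨1 / 2 + k, 1 / 2⟩) = 2 - k := by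
    rw [Xt_Sq_of_half_lt (by linarith) (by linarith), infDist_singleton, dist_mk_of_im_eq,
      abs_of_neg] <;> linarith
  -- `1 + (1 + k) ^ 2 ≤ (2 - k) ^ 2` is exactly `k ≤ 1 / 3`.
  have hk' : √(1 + (1 + k) ^ 2) ≤ 2 - k := Real.sqrt_le_iff.2 ⟨by linarith, by nlinarith⟩
  rw [wG, hd, hx, hy, min_eq_left hk']

theorem wG_Sq_xz {k : ℝ} (hk0 : 0 < k) (hk : k < 1 / 3) :
    wG Sq ⟨1 / 2 + k, 1 / 2⟩ ⟨-1 / 2 - k, 1 / 2⟩ = (1 + 2 * k) / 2 := by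
  have hd : dist (⟨1 / 2 + k, 1 / 2⟩ : ℂ) ⟨-1 / 2 - k, 1 / 2⟩ = 1 + 2 * k := by
    rw [dist_mk_of_im_eq, abs_of_pos] <;> linarith
  have hx : infDist ⟨1 / 2 + k, 1 / 2⟩ (Xt Sq ⟨-1 / 2 - k, 1 / 2⟩) = 2 := by
    rw [Xt_Sq_of_lt_neg_half (by linarith) (by linarith), infDist_singleton, dist_mk_of_im_eq,
      abs_of_pos] <;> linarith
  have hz : infDist ⟨-1 / 2 - k, 1 / 2⟩ (Xt Sq ⟨1 / 2 + k, 1 / 2⟩) = 2 := by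
    rw [Xt_Sq_of_half_lt (by linarith) (by linarith), infDist_singleton, dist_mk_of_im_eq,
      abs_of_neg] <;> linarith
  rw [wG, hd, hx, hz, min_self]

theorem wG_Sq_zy {k : ℝ} (hk0 : 0 < k) (hk : k < 1 / 3) :
    wG Sq ⟨-1 / 2 - k, 1 / 2⟩ ⟨-1 / 2, 1 / 2⟩ = k / (1 - k) := by
  have hd : dist (⟨-1 / 2 - k, 1 / 2⟩ : ℂ) ⟨-1 / 2, 1 / 2⟩ = k := by
    rw [dist_mk_of_im_eq, abs_of_neg] <;> linarith
  have hz : infDist ⟨-1 / 2 - k, 1 / 2⟩ (Xt Sq ⟨-1 / 2, 1 / 2⟩) = 1 - k := by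
    rw [infDist_Xt_Sq_left_center, min_eq_left]
    · rw [abs_of_pos] <;> linarith
    · rw [abs_of_pos (by linarith)]
      exact Real.le_sqrt_of_sq_le (by nlinarith)
  have hy : infDist ⟨-1 / 2, 1 / 2⟩ (Xt Sq ⟨-1 / 2 - k, 1 / 2⟩) = 1 - k := by
    rw [Xt_Sq_of_lt_neg_half (by linarith) (by linarith), infDist_singleton, dist_mk_of_im_eq,
      abs_of_pos] <;> linarith
  rw [wG, hd, hz, hy, min_self]

open Filter Topology in
theorem tendsto_wG_Sq_ratio :
    Tendsto (fun k : ℝ => (1 + k) / √(1 + (1 + k) ^ 2) / ((1 + 2 * k) / 2 + k / (1 - k))) (𝓝 0)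
      (𝓝 √2) := by
  have hc : ContinuousAt
      (fun k : ℝ => (1 + k) / √(1 + (1 + k) ^ 2) / ((1 + 2 * k) / 2 + k / (1 - k))) 0 := by
    fun_prop (disch := norm_num)
  convert hc.tendsto using 2
  field_simp
  norm_num

/-- In the domain `Sq`, for `x = 1/2 + k + i/2`, `y = −1/2 + i/2`, `z = −1/2 − k + i/2`
with `0 < k < 1/3`, the values of `w` are as stated, and the quotient
`w(x,y)/(w(x,z)+w(z,y))` tends to `√2` as `k → 0⁺`; hence `w` is not a metric and the
constant `√2` is sharp for arbitrary convex domains. -/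
theorem w_not_metric_square :
    (∀ k : ℝ, 0 < k → k < 1/3 →
      wG Sq (1/2 + (k : ℂ) + Complex.I/2) (-(1/2) + Complex.I/2)
          = (1 + k) / Real.sqrt (1 + (1 + k)^2) ∧
      wG Sq (1/2 + (k : ℂ) + Complex.I/2) (-(1/2) - (k : ℂ) + Complex.I/2)
          = (1 + 2*k) / 2 ∧
      wG Sq (-(1/2) - (k : ℂ) + Complex.I/2) (-(1/2) + Complex.I/2)
          = k / (1 - k)) ∧
    Filter.Tendsto (fun k : ℝ =>
        wG Sq (1/2 + (k : ℂ) + Complex.I/2) (-(1/2) + Complex.I/2) /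
          (wG Sq (1/2 + (k : ℂ) + Complex.I/2) (-(1/2) - (k : ℂ) + Complex.I/2) +
            wG Sq (-(1/2) - (k : ℂ) + Complex.I/2) (-(1/2) + Complex.I/2)))
      (nhdsWithin 0 (Set.Ioi 0)) (nhds (Real.sqrt 2)) := by
  have hx (k : ℝ) : 1 / 2 + (k : ℂ) + I / 2 = ⟨1 / 2 + k, 1 / 2⟩ := by
    apply Complex.ext <;> simp
  have hy : -(1 / 2) + I / 2 = (⟨-1 / 2, 1 / 2⟩ : ℂ) := by
    apply Complex.ext <;> norm_num
  have hz (k : ℝ) : -(1 / 2) - (k : ℂ) + I / 2 = ⟨-1 / 2 - k, 1 / 2⟩ := by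
    apply Complex.ext <;> norm_num
  simp only [hx, hy, hz]
  refine ⟨fun k hk0 hk => ⟨wG_Sq_xy hk0 hk, wG_Sq_xz hk0 hk, wG_Sq_zy hk0 hk⟩, ?_⟩
  refine (tendsto_wG_Sq_ratio.mono_left nhdsWithin_le_nhds).congr' ?_
  filter_upwards [Ioo_mem_nhdsGT (by norm_num : (0 : ℝ) < 1 / 3)] with k ⟨hk0, hk⟩
  rw [wG_Sq_xy hk0 hk, wG_Sq_xz hk0 hk, wG_Sq_zy hk0 hk]
end

section
/- For any convex domain G ⊊ ℝⁿ and all x, y ∈ G, j*_G(x,y) ≤ w_G(x,y). -/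
/-!
Let `z ∈ ∂G` be a nearest boundary point of `u ∈ G`; its reflection `2z - u` lies in `Xt G u`,
so the distance from any `v` to `Xt G u` is at most `|v - u| + 2 d_G(u)`. Conversely, by convexity
every point of `Xt G u` lies outside `closure G`, hence outside the ball `B(v, d_G(v)) ⊆ G`, so that
distance is at least `d_G(v) > 0`. The denominator of `w_G` is therefore positive and at most the
denominator `|x - y| + 2 min(d_G(x), d_G(y))` of `j*_G`.
-/

open Metric Set

variable {E : Type*} [NormedAddCommGroup E] [NormedSpace ℝ E]

theorem dG_pos_s9 {F : Type*} [NormedAddCommGroup F] {G : Set F} {v : F} (hG : IsOpen G)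
    (hF : (frontier G).Nonempty) (hv : v ∈ G) : 0 < dG G v := by
  rw [dG, ← isClosed_frontier.notMem_iff_infDist_pos hF, hG.frontier_eq]
  exact fun h => h.2 hv

section

variable {G : Set E} {u v : E}

theorem ball_dG_subset (hG : IsOpen G) (hv : v ∈ G) : ball v (dG G v) ⊆ G := by
  rcases le_or_gt (dG G v) 0 with h | h
  · simp [ball_eq_empty.2 h]
  refine (convex_ball v _).isPreconnected.subset_of_closure_inter_subset hG
    ⟨v, mem_ball_self h, hv⟩ ?_
  rintro p ⟨hpc, hpb⟩
  by_contra hpG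
  exact ball_infDist_subset_compl hpb ⟨hpc, by rwa [hG.interior_eq]⟩

theorem Xt_subset_compl_closure (hG : IsOpen G) (hGc : Convex ℝ G) (hu : u ∈ G) :
    Xt G u ⊆ (closure G)ᶜ := by
  rintro p ⟨-, hmid⟩ hp
  have hmid_int : (2⁻¹ : ℝ) • u + (2⁻¹ : ℝ) • p ∈ interior G :=
    hGc.combo_interior_closure_mem_interior (by rwa [hG.interior_eq]) hp
      (by norm_num) (by norm_num) (by norm_num)
  rw [smul_add] at hmid
  exact hmid.2 hmid_int

theorem dG_le_infDist_Xt (hG : IsOpen G) (hGc : Convex ℝ G) (hu : u ∈ G) (hv : v ∈ G)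
    (hX : (Xt G u).Nonempty) : dG G v ≤ infDist v (Xt G u) := by
  refine (le_infDist hX).2 fun p hp => not_lt.1 fun hlt => ?_
  exact Xt_subset_compl_closure hG hGc hu hp
    (subset_closure (ball_dG_subset hG hv (mem_ball'.2 hlt)))

theorem exists_mem_Xt_dist_eq [ProperSpace E] (hF : (frontier G).Nonempty) (u : E) :
    ∃ p ∈ Xt G u, dist u p = 2 * dG G u := by
  obtain ⟨z, hz, hdz⟩ := isClosed_frontier.exists_infDist_eq_dist hF u
  have hdist : dist u (z + (z - u)) = 2 * dG G u := by
    rw [dist_eq_norm, show u - (z + (z - u)) = (2 : ℝ) • (u - z) by module, norm_smul, dG, hdz,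
      dist_eq_norm, Real.norm_two]
  have hmid : (2⁻¹ : ℝ) • (u + (z + (z - u))) = z := by module
  exact ⟨z + (z - u), ⟨hdist, by rwa [hmid]⟩, hdist⟩

theorem infDist_Xt_le [ProperSpace E] (hF : (frontier G).Nonempty) (u v : E) :
    infDist v (Xt G u) ≤ dist v u + 2 * dG G u := by
  obtain ⟨p, hp, hdp⟩ := exists_mem_Xt_dist_eq hF u
  calc infDist v (Xt G u) ≤ dist v p := infDist_le_dist_of_mem hp
    _ ≤ dist v u + dist u p := dist_triangle _ _ _
    _ = dist v u + 2 * dG G u := by rw [hdp]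

end

theorem j_le_w_convex_general (n : ℕ) (G : Set (EuclideanSpace ℝ (Fin n)))
    (hGopen : IsOpen G) (hGconv : Convex ℝ G)
    (hGne : G ≠ Set.univ)
    (x y : EuclideanSpace ℝ (Fin n)) (hx : x ∈ G) (hy : y ∈ G) :
    jG G x y ≤ wG G x y := by
  have hF : (frontier G).Nonempty := nonempty_frontier_iff.2 ⟨⟨x, hx⟩, hGne⟩
  have hX : ∀ u, (Xt G u).Nonempty := fun u =>
    (exists_mem_Xt_dist_eq hF u).imp fun _ => And.left
  have hpos : 0 < min (infDist x (Xt G y)) (infDist y (Xt G x)) :=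
    lt_min ((dG_pos_s9 hGopen hF hx).trans_le (dG_le_infDist_Xt hGopen hGconv hy hx (hX y)))
      ((dG_pos_s9 hGopen hF hy).trans_le (dG_le_infDist_Xt hGopen hGconv hx hy (hX x)))
  have hle : min (infDist x (Xt G y)) (infDist y (Xt G x))
      ≤ dist x y + 2 * min (dG G x) (dG G y) :=
    calc _ ≤ min (dist x y + 2 * dG G y) (dist y x + 2 * dG G x) :=
          min_le_min (infDist_Xt_le hF y x) (infDist_Xt_le hF x y)
      _ = dist x y + 2 * min (dG G x) (dG G y) := by
          rw [dist_comm y x, min_add_add_left, ← mul_min_of_nonneg _ _ zero_le_two, min_comm]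
  exact div_le_div_of_nonneg_left dist_nonneg hpos hle

/-- For any convex domain `G ⊊ ℝⁿ` and all `x, y ∈ G`, `j*_G(x,y) ≤ w_G(x,y)`. -/
theorem j_le_w_convex (n : ℕ) (G : Set (EuclideanSpace ℝ (Fin n)))
    (hGopen : IsOpen G) (hGconv : Convex ℝ G) (hGnonempty : G.Nonempty)
    (hGne : G ≠ Set.univ)
    (x y : EuclideanSpace ℝ (Fin n)) (hx : x ∈ G) (hy : y ∈ G) :
    jG G x y ≤ wG G x y :=
  j_le_w_convex_general n G hGopen hGconv hGne x y hx hy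
end

section
/- For points x, y ∈ Bⁿ∖{0} with |y| ≤ |x|, one has |y − x̃| ≤ |x − ỹ|, where x̃ = x(2−|x|)/|x| and ỹ = y(2−|y|)/|y|. -/
open scoped RealInnerProductSpace

variable {E : Type*} [NormedAddCommGroup E] [InnerProductSpace ℝ E]

lemma norm_sub_radial_smul_sq (t : ℝ) {x : E} (hx : x ≠ 0) (y : E) :
    ‖y - ((t - ‖x‖) / ‖x‖) • x‖ ^ 2 =
      ‖y‖ ^ 2 - 2 * ((t - ‖x‖) / ‖x‖) * ⟪x, y⟫ + (t - ‖x‖) ^ 2 := by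
  have hx' : ‖x‖ ≠ 0 := norm_ne_zero_iff.mpr hx
  rw [norm_sub_sq_real, norm_smul, real_inner_smul_right, real_inner_comm, Real.norm_eq_abs,
    mul_pow, sq_abs, div_pow]
  field_simp

theorem norm_sub_radial_smul_le {t : ℝ} (ht : 0 ≤ t) {x y : E} (hx : x ≠ 0) (hy : y ≠ 0)
    (hle : ‖y‖ ≤ ‖x‖) :
    ‖y - ((t - ‖x‖) / ‖x‖) • x‖ ≤ ‖x - ((t - ‖y‖) / ‖y‖) • y‖ := by
  have hx' : 0 < ‖x‖ := norm_pos_iff.mpr hx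
  have hy' : 0 < ‖y‖ := norm_pos_iff.mpr hy
  have gap : ‖x - ((t - ‖y‖) / ‖y‖) • y‖ ^ 2 - ‖y - ((t - ‖x‖) / ‖x‖) • x‖ ^ 2 =
      2 * t * (‖x‖ - ‖y‖) * (‖x‖ * ‖y‖ - ⟪x, y⟫) / (‖x‖ * ‖y‖) := by
    rw [norm_sub_radial_smul_sq t hx, norm_sub_radial_smul_sq t hy, real_inner_comm y x]
    field_simp
    ring
  have gap_nonneg : 0 ≤ 2 * t * (‖x‖ - ‖y‖) * (‖x‖ * ‖y‖ - ⟪x, y⟫) / (‖x‖ * ‖y‖) :=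
    div_nonneg (mul_nonneg (mul_nonneg (by positivity) (sub_nonneg.mpr hle))
      (sub_nonneg.mpr (real_inner_le_norm x y))) (by positivity)
  exact (sq_le_sq₀ (norm_nonneg _) (norm_nonneg _)).mp (by linarith)

theorem tilde_dist_le_general (n : ℕ) (x y : EuclideanSpace ℝ (Fin n)) (hx0 : x ≠ 0) (hy0 : y ≠ 0)
    (hle : ‖y‖ ≤ ‖x‖) :
    ‖y - ((2 - ‖x‖) / ‖x‖) • x‖ ≤ ‖x - ((2 - ‖y‖) / ‖y‖) • y‖ :=
  norm_sub_radial_smul_le zero_le_two hx0 hy0 hle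

/-- For `x, y ∈ Bⁿ ∖ {0}` with `|y| ≤ |x|`, one has `|y − x̃| ≤ |x − ỹ|`, where
`x̃ = x(2−|x|)/|x|`. -/
theorem tilde_dist_le (n : ℕ) (x y : EuclideanSpace ℝ (Fin n))
    (hx : x ∈ Metric.ball (0 : EuclideanSpace ℝ (Fin n)) 1) (hx0 : x ≠ 0)
    (hy : y ∈ Metric.ball (0 : EuclideanSpace ℝ (Fin n)) 1) (hy0 : y ≠ 0)
    (hle : ‖y‖ ≤ ‖x‖) :
    ‖y - ((2 - ‖x‖) / ‖x‖) • x‖ ≤ ‖x - ((2 - ‖y‖) / ‖y‖) • y‖ :=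
  tilde_dist_le_general n x y hx0 hy0 hle
end

section
/- For distinct points x, y ∈ B² collinear with the origin, w_{B²}(x,y) = s_{B²}(x,y). In particular, for real −1 < −x < y ≤ x < 1 (with x > 0), s_{B²}(x,y) = (x−y)/(2−(x+y)) = |x−y|/|y−(2−x)| = w_{B²}(x,y). -/
open Metric Set

variable {E : Type*} [NormedAddCommGroup E] [NormedSpace ℝ E]

/-- `x̃ = x(2−|x|)/|x|` for `x ∈ B² ∖ {0}`. -/
noncomputable def tilde (x : ℂ) : ℂ := (((2 - ‖x‖) / ‖x‖ : ℝ) : ℂ) * x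

/-- The quasi-metric `w` of the unit disk. -/
noncomputable def wB (x y : ℂ) : ℝ :=
  if x = 0 then ‖y‖ / (2 - ‖y‖)
  else if y = 0 then ‖x‖ / (2 - ‖x‖)
  else ‖x - y‖ / min (‖x - tilde y‖) (‖y - tilde x‖)

/-! For `z` on the unit circle the triangle inequality gives
`|x - z| + |z - y| ≥ |2z - (x + y)| ≥ 2 - |x + y|`, and when `x = a u`, `y = b u` with `|u| = 1`
the bound is attained at `z = ±u`, so `s(x, y) = |a - b| / (2 - |a + b|)`. On that line
`x̃ = sign(a) (2 - |a|) u` is the reflection of `x` in the boundary point `sign(a) u`, hence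
`|y - x̃| = 2 - sign(a) (a + b)`; the smaller of the two such distances is `2 - |a + b|`, since at
least one of `a`, `b` has the sign of `a + b`. -/

theorem norm_smul_of_norm_eq_one {u : E} (hu : ‖u‖ = 1) (a : ℝ) : ‖a • u‖ = |a| := by
  rw [norm_smul, hu, mul_one, Real.norm_eq_abs]

theorem dist_smul_smul_of_norm_eq_one {u : E} (hu : ‖u‖ = 1) (a b : ℝ) :
    dist (a • u) (b • u) = |a - b| := by
  rw [dist_eq_norm, ← sub_smul, norm_smul_of_norm_eq_one hu]

theorem two_mul_norm_sub_norm_add_le_dist_add_dist (x y z : E) :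
    2 * ‖z‖ - ‖x + y‖ ≤ dist x z + dist z y := by
  have h : (2 : ℝ) • z = (z - x) + (z - y) + (x + y) := by
    rw [two_smul]; abel
  have hnorm : ‖(2 : ℝ) • z‖ = 2 * ‖z‖ := by rw [norm_smul, Real.norm_two]
  rw [dist_comm x z, dist_eq_norm, dist_eq_norm]
  linarith [(norm_add₃_le : ‖(z - x) + (z - y) + (x + y)‖ ≤ _), congrArg norm h]

theorem exists_unit_smul_of_collinear [Nontrivial E] {x y : E}
    (h : Collinear ℝ ({0, x, y} : Set E)) :
    ∃ u : E, ‖u‖ = 1 ∧ ∃ a b : ℝ, x = a • u ∧ y = b • u := by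
  obtain ⟨v, hv⟩ := (collinear_iff_of_mem (Set.mem_insert 0 _)).1 h
  obtain ⟨a, rfl⟩ : ∃ a : ℝ, x = a • v := by simpa using hv x (by simp)
  obtain ⟨b, rfl⟩ : ∃ b : ℝ, y = b • v := by simpa using hv y (by simp)
  rcases eq_or_ne v 0 with rfl | hv0
  · obtain ⟨u, hu⟩ := exists_norm_eq E zero_le_one
    exact ⟨u, hu, 0, 0, by simp⟩
  · refine ⟨‖v‖⁻¹ • v, norm_smul_inv_norm hv0, a * ‖v‖, b * ‖v‖, ?_, ?_⟩ <;>
      rw [smul_smul, mul_assoc, mul_inv_cancel₀ (norm_ne_zero_iff.2 hv0), mul_one]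

theorem exists_abs_eq_one_abs_sub_add_abs_sub {a b : ℝ} (ha : |a| ≤ 1) (hb : |b| ≤ 1) :
    ∃ ε : ℝ, |ε| = 1 ∧ |a - ε| + |ε - b| = 2 - |a + b| := by
  rw [abs_le] at ha hb
  rcases abs_cases (a + b) with ⟨hab, -⟩ | ⟨hab, -⟩
  · refine ⟨1, abs_one, ?_⟩
    rw [abs_of_nonpos (by linarith), abs_of_nonneg (by linarith), hab]; ring
  · refine ⟨-1, by simp, ?_⟩
    rw [abs_of_nonneg (by linarith), abs_of_nonpos (by linarith), hab]; ring

theorem iInf_dist_add_dist_sphere_smul {u : E} (hu : ‖u‖ = 1) {a b : ℝ} (ha : |a| ≤ 1)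
    (hb : |b| ≤ 1) :
    ⨅ z : sphere (0 : E) 1, (dist (a • u) (z : E) + dist (z : E) (b • u)) = 2 - |a + b| := by
  obtain ⟨ε, hε, hεab⟩ := exists_abs_eq_one_abs_sub_add_abs_sub ha hb
  have hεu : ε • u ∈ sphere (0 : E) 1 := by
    rw [mem_sphere_zero_iff_norm, norm_smul_of_norm_eq_one hu, hε]
  have : Nonempty (sphere (0 : E) 1) := ⟨⟨_, hεu⟩⟩
  refine IsGLB.ciInf_eq (IsLeast.isGLB ⟨⟨⟨_, hεu⟩, ?_⟩, ?_⟩)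
  · simp only [dist_smul_smul_of_norm_eq_one hu, hεab]
  · rintro _ ⟨⟨z, hz⟩, rfl⟩
    have hab : ‖a • u + b • u‖ = |a + b| := by
      rw [← add_smul, norm_smul_of_norm_eq_one hu]
    have := two_mul_norm_sub_norm_add_le_dist_add_dist (a • u) (b • u) z
    rw [mem_sphere_zero_iff_norm.1 hz, hab] at this
    linarith

theorem sG_unitBall_smul {u : E} (hu : ‖u‖ = 1) {a b : ℝ} (ha : |a| ≤ 1) (hb : |b| ≤ 1) :
    sG (ball (0 : E) 1) (a • u) (b • u) = |a - b| / (2 - |a + b|) := by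
  rw [sG, frontier_ball 0 one_ne_zero, iInf_dist_add_dist_sphere_smul hu ha hb,
    dist_smul_smul_of_norm_eq_one hu]

theorem abs_sub_reflect {a : ℝ} (b : ℝ) (ha0 : a ≠ 0) (ha : |a| ≤ 1) (hb : |b| ≤ 1) :
    |b - (2 - |a|) / |a| * a| = 2 - a * (a + b) / |a| := by
  rw [abs_le] at ha hb
  rcases ha0.lt_or_gt with ha' | ha'
  · rw [abs_of_neg ha', abs_of_nonneg (by field_simp; nlinarith)]
    field_simp; ring
  · rw [abs_of_pos ha', abs_of_nonpos (by field_simp; nlinarith)]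
    field_simp; ring

theorem min_abs_sub_reflect {a b : ℝ} (ha0 : a ≠ 0) (hb0 : b ≠ 0) (ha : |a| ≤ 1) (hb : |b| ≤ 1) :
    min |a - (2 - |b|) / |b| * b| |b - (2 - |a|) / |a| * a| = 2 - |a + b| := by
  rw [abs_sub_reflect a hb0 hb ha, abs_sub_reflect b ha0 ha hb, add_comm b a]
  have hle : ∀ c ≠ (0 : ℝ), c * (a + b) / |c| ≤ |a + b| := fun c hc => by
    rw [div_le_iff₀ (abs_pos.2 hc), mul_comm |a + b|, ← abs_mul]
    exact le_abs_self _
  have heq : ∀ c ≠ (0 : ℝ), 0 ≤ c * (a + b) → c * (a + b) / |c| = |a + b| := fun c hc h => by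
    rw [← abs_of_nonneg h, abs_mul, mul_div_cancel_left₀ _ (abs_ne_zero.2 hc)]
  have hsign : 0 ≤ b * (a + b) ∨ 0 ≤ a * (a + b) := by
    by_contra! h
    nlinarith [sq_nonneg (a + b)]
  refine le_antisymm ?_ (le_min (by linarith [hle b hb0]) (by linarith [hle a ha0]))
  rcases hsign with h | h
  · exact (min_le_left _ _).trans (by rw [heq b hb0 h])
  · exact (min_le_right _ _).trans (by rw [heq a ha0 h])

theorem tilde_smul {u : ℂ} (hu : ‖u‖ = 1) (a : ℝ) : tilde (a • u) = ((2 - |a|) / |a| * a) • u := by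
  rw [tilde, norm_smul_of_norm_eq_one hu, Complex.real_smul, Complex.real_smul]
  push_cast; ring

theorem wB_smul {u : ℂ} (hu : ‖u‖ = 1) {a b : ℝ} (ha : |a| ≤ 1) (hb : |b| ≤ 1) :
    wB (a • u) (b • u) = |a - b| / (2 - |a + b|) := by
  have hu0 : u ≠ 0 := norm_ne_zero_iff.1 (by rw [hu]; exact one_ne_zero)
  rcases eq_or_ne a 0 with rfl | ha0
  · simp [wB, hu]
  rcases eq_or_ne b 0 with rfl | hb0
  · simp [wB, ha0, hu0, hu]
  rw [wB, if_neg (smul_ne_zero ha0 hu0), if_neg (smul_ne_zero hb0 hu0), tilde_smul hu,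
    tilde_smul hu, ← dist_eq_norm, ← dist_eq_norm, ← dist_eq_norm,
    dist_smul_smul_of_norm_eq_one hu, dist_smul_smul_of_norm_eq_one hu,
    dist_smul_smul_of_norm_eq_one hu, min_abs_sub_reflect ha0 hb0 ha hb]

/-- For distinct `x, y ∈ B²` collinear with the origin, `w_{B²}(x,y) = s_{B²}(x,y)`;
in particular, for real `−1 < −x < y ≤ x < 1`,
`s_{B²}(x,y) = (x−y)/(2−(x+y)) = |x−y|/|y−(2−x)| = w_{B²}(x,y)`. -/
theorem w_eq_s_collinear :
    (∀ x y : ℂ, x ∈ Metric.ball (0 : ℂ) 1 → y ∈ Metric.ball (0 : ℂ) 1 → x ≠ y →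
      Collinear ℝ ({0, x, y} : Set ℂ) →
      wB x y = sG (Metric.ball (0 : ℂ) 1) x y) ∧
    ∀ x y : ℝ, -1 < -x → -x < y → y ≤ x → x < 1 →
      sG (Metric.ball (0 : ℂ) 1) (x : ℂ) (y : ℂ) = (x - y) / (2 - (x + y)) ∧
      (x - y) / (2 - (x + y)) = |x - y| / |y - (2 - x)| ∧
      |x - y| / |y - (2 - x)| = wB (x : ℂ) (y : ℂ) := by
  refine ⟨fun x y hx hy _ hcol => ?_, fun x y h₁ h₂ h₃ h₄ => ?_⟩
  · obtain ⟨u, hu, a, b, rfl, rfl⟩ := exists_unit_smul_of_collinear hcol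
    rw [mem_ball_zero_iff, norm_smul_of_norm_eq_one hu] at hx hy
    rw [wB_smul hu hx.le hy.le, sG_unitBall_smul hu hx.le hy.le]
  · have hx : |x| ≤ 1 := abs_le.2 ⟨by linarith, h₄.le⟩
    have hy : |y| ≤ 1 := abs_le.2 ⟨by linarith, by linarith⟩
    have hxy : |x - y| = x - y := abs_of_nonneg (by linarith)
    have hxy' : |x + y| = x + y := abs_of_nonneg (by linarith)
    have hyx : |y - (2 - x)| = 2 - (x + y) := by rw [abs_of_neg (by linarith)]; ring
    have hreal : ∀ t : ℝ, (t : ℂ) = t • (1 : ℂ) := fun t => by simp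
    rw [hreal x, hreal y, sG_unitBall_smul norm_one hx hy, wB_smul norm_one hx hy, hxy, hxy', hyx]
    exact ⟨rfl, rfl, rfl⟩
end

section
/- For points x = h·u' and y = h·v' with u', v' on the unit sphere, angle μ = ∠U'OV' ∈ (0, π), and h = cos(μ/2), one has |x−y| = sin μ and the strict inequality s_{Bⁿ}(x,y) ≤ cos(μ/2) < |x−y| / √(|x−y|² + 4(1−cos(μ/2))²) = p_{Bⁿ}(x,y). -/
/-! For `z` on the unit sphere, `‖h u - z‖ = ‖u - h z‖`, so the triangle inequality through `h z`
gives `|x - z| + |z - y| ≥ |u' - v'|`, while `|x - y| = h |u' - v'|`: hence `s ≤ h`. Both points lie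
at distance `1 - h` from the sphere, and with `|x - y| = 2 h sin(μ/2)` the strict inequality squares
to `(1 - h)² < (1 - h²)²`. -/

open Metric Set

variable {E : Type*} [NormedAddCommGroup E] [NormedSpace ℝ E]

open InnerProductGeometry

section InnerProductSpace

variable {F : Type*} [NormedAddCommGroup F] [InnerProductSpace ℝ F]

theorem norm_smul_sub_eq_norm_sub_smul {u z : F} (huz : ‖u‖ = ‖z‖) (a : ℝ) :
    ‖a • u - z‖ = ‖u - a • z‖ := by
  have hsq : ‖a • u - z‖ ^ 2 = ‖u - a • z‖ ^ 2 := by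
    simp only [norm_sub_sq_real, norm_smul, real_inner_smul_left, real_inner_smul_right,
      Real.norm_eq_abs, mul_pow, sq_abs, huz]
    ring
  exact (sq_eq_sq₀ (norm_nonneg _) (norm_nonneg _)).mp hsq

theorem norm_sub_le_dist_smul_add_dist_smul {u v z : F} (hu : ‖u‖ = ‖z‖) (hv : ‖v‖ = ‖z‖)
    (a : ℝ) : ‖u - v‖ ≤ dist (a • u) z + dist z (a • v) := by
  rw [dist_eq_norm, dist_comm, dist_eq_norm, norm_smul_sub_eq_norm_sub_smul hu,
    norm_smul_sub_eq_norm_sub_smul hv, ← norm_neg (v - a • z), neg_sub]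
  exact norm_sub_le_norm_sub_add_norm_sub u (a • z) v

theorem sG_unitBall_smul_le {u v : F} (hu : ‖u‖ = 1) (hv : ‖v‖ = 1) {a : ℝ} (ha : 0 ≤ a) :
    sG (ball (0 : F) 1) (a • u) (a • v) ≤ a := by
  have hfrontier : frontier (ball (0 : F) 1) = sphere 0 1 := frontier_ball 0 one_ne_zero
  have : Nonempty (frontier (ball (0 : F) 1)) := ⟨⟨u, by simp [hfrontier, hu]⟩⟩
  have hinf : ‖u - v‖ ≤ ⨅ z : frontier (ball (0 : F) 1), (dist (a • u) z + dist (z : F) (a • v)) :=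
    le_ciInf fun z => by
      have hz : ‖(z : F)‖ = 1 := by simpa [hfrontier] using z.2
      exact norm_sub_le_dist_smul_add_dist_smul (hu.trans hz.symm) (hv.trans hz.symm) a
  refine div_le_of_le_mul₀ ((norm_nonneg _).trans hinf) ha ?_
  rw [dist_smul₀, Real.norm_eq_abs, abs_of_nonneg ha, dist_eq_norm]
  exact mul_le_mul_of_nonneg_left hinf ha

theorem norm_sub_eq_two_mul_sin_half_angle {u v : F} (hu : ‖u‖ = 1) (hv : ‖v‖ = 1) :
    ‖u - v‖ = 2 * Real.sin (angle u v / 2) := by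
  have hsin : 0 ≤ Real.sin (angle u v / 2) :=
    Real.sin_nonneg_of_nonneg_of_le_pi (by linarith [angle_nonneg u v])
      (by linarith [angle_le_pi u v, Real.pi_pos])
  have hcos : Real.cos (angle u v) = 1 - 2 * Real.sin (angle u v / 2) ^ 2 := by
    have hdouble := Real.cos_two_mul (angle u v / 2)
    rw [mul_div_cancel₀ _ two_ne_zero] at hdouble
    linarith [Real.sin_sq_add_cos_sq (angle u v / 2)]
  have hsq := norm_sub_sq_eq_norm_sq_add_norm_sq_sub_two_mul_norm_mul_norm_mul_cos_angle u v
  rw [hu, hv, hcos] at hsq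
  exact (sq_eq_sq₀ (norm_nonneg _) (by positivity)).mp (by linear_combination hsq)

end InnerProductSpace

theorem dG_unitBall_smul {u : E} (hu : ‖u‖ = 1) {a : ℝ} (ha₀ : 0 ≤ a) (ha₁ : a ≤ 1) :
    dG (ball (0 : E) 1) (a • u) = 1 - a := by
  have hu_mem : u ∈ sphere (0 : E) 1 := by simpa using hu
  have hdist : dist (a • u) u = 1 - a := by
    rw [dist_eq_norm, show a • u - u = (a - 1) • u by rw [sub_smul, one_smul], norm_smul, hu,
      mul_one, Real.norm_eq_abs, abs_of_nonpos (by linarith), neg_sub]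
  rw [dG, frontier_ball 0 one_ne_zero]
  refine le_antisymm (hdist ▸ infDist_le_dist_of_mem hu_mem) ((le_infDist ⟨u, hu_mem⟩).mpr ?_)
  intro z hz
  have hz1 : ‖z‖ = 1 := by simpa using hz
  calc 1 - a = ‖z‖ - ‖a • u‖ := by
        rw [hz1, norm_smul, hu, Real.norm_eq_abs, abs_of_nonneg ha₀, mul_one]
    _ ≤ ‖z - a • u‖ := norm_sub_norm_le z (a • u)
    _ = dist (a • u) z := (dist_eq_norm' _ _).symm

theorem cos_half_lt_sin_div_sqrt {μ : ℝ} (hμ₀ : 0 < μ) (hμπ : μ < Real.pi) :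
    Real.cos (μ / 2) < Real.sin μ / √(Real.sin μ ^ 2 + 4 * (1 - Real.cos (μ / 2)) ^ 2) := by
  set h := Real.cos (μ / 2)
  set s := Real.sin (μ / 2)
  have hh : 0 < h := Real.cos_pos_of_mem_Ioo ⟨by linarith, by linarith⟩
  have hs : 0 < s := Real.sin_pos_of_pos_of_lt_pi (by linarith) (by linarith)
  have hhs : s ^ 2 = 1 - h ^ 2 := by linarith [Real.sin_sq_add_cos_sq (μ / 2)]
  have hsin : Real.sin μ = 2 * s * h := by
    rw [← Real.sin_two_mul, mul_div_cancel₀ _ two_ne_zero]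
  have hh1 : h < 1 := by nlinarith
  rw [hsin, lt_div_iff₀ (by positivity), ← pow_lt_pow_iff_left₀ (by positivity) (by positivity)
    two_ne_zero, mul_pow, Real.sq_sqrt (by positivity)]
  have key : 0 < 4 * h ^ 2 * (1 - h) ^ 2 * (2 * h + h ^ 2) := by positivity
  linear_combination key - 4 * h ^ 2 * (1 - h ^ 2) * hhs

/-- For unit vectors `u', v'` at angle `μ ∈ (0, π)` and `x = cos(μ/2) u'`,
`y = cos(μ/2) v'`, one has `|x−y| = sin μ` and
`s_{Bⁿ}(x,y) ≤ cos(μ/2) < |x−y|/√(|x−y|² + 4(1−cos(μ/2))²) = p_{Bⁿ}(x,y)`. -/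
theorem s_lt_p_symmetric_config (n : ℕ) (u' v' : EuclideanSpace ℝ (Fin n))
    (hu : ‖u'‖ = 1) (hv : ‖v'‖ = 1) (μ : ℝ)
    (hμ : InnerProductGeometry.angle u' v' = μ) (hμ0 : 0 < μ) (hμπ : μ < Real.pi)
    (x y : EuclideanSpace ℝ (Fin n))
    (hx : x = Real.cos (μ / 2) • u') (hy : y = Real.cos (μ / 2) • v') :
    dist x y = Real.sin μ ∧
    sG (Metric.ball (0 : EuclideanSpace ℝ (Fin n)) 1) x y ≤ Real.cos (μ / 2) ∧
    Real.cos (μ / 2)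
      < dist x y / Real.sqrt (dist x y ^ 2 + 4 * (1 - Real.cos (μ / 2)) ^ 2) ∧
    dist x y / Real.sqrt (dist x y ^ 2 + 4 * (1 - Real.cos (μ / 2)) ^ 2)
      = pG (Metric.ball (0 : EuclideanSpace ℝ (Fin n)) 1) x y := by
  have hh₀ : 0 ≤ Real.cos (μ / 2) :=
    Real.cos_nonneg_of_mem_Icc ⟨by linarith [Real.pi_pos], by linarith⟩
  have hh₁ : Real.cos (μ / 2) ≤ 1 := Real.cos_le_one _
  have hxy : dist x y = Real.sin μ := by
    have hdouble := Real.sin_two_mul (μ / 2)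
    rw [mul_div_cancel₀ _ two_ne_zero] at hdouble
    rw [hx, hy, dist_smul₀, dist_eq_norm, norm_sub_eq_two_mul_sin_half_angle hu hv, hμ,
      Real.norm_eq_abs, abs_of_nonneg hh₀, hdouble]
    ring
  refine ⟨hxy, ?_, hxy ▸ cos_half_lt_sin_div_sqrt hμ0 hμπ, ?_⟩
  · rw [hx, hy]
    exact sG_unitBall_smul_le hu hv hh₀
  · rw [pG, hx, hy, dG_unitBall_smul hu hh₀ hh₁, dG_unitBall_smul hv hh₀ hh₁]
    rw [mul_assoc, ← sq]
end
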